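/- arXiv:2603.11134 — 7 statements merged into one kernel-verified Lean document; each statement's English description precedes it below -/
import Mathlib

section
/- Let Y be a finite nonempty type, P a positive probability measure on Y, and Y_1,...,Y_{N+1} an i.i.d. sample from P. Then for every y in Y, the expectation of (N+1)/(|{n in [N] : Y_n = y}| + 1) is at most 1/P({y}). -/
/-!
Multiplying by `P y`, the claim becomes
`E[(N+1) / #{n ≤ N+1 | Yₙ = y} · 1{Y_{N+1} = y}] ≤ 1`, because on the event `Y_{N+1} = y`
the full count is the count over the first `N` plus one.
The i.i.d. weight is invariant under permuting coordinates, so the indicator may sit on any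
coordinate; averaging over all `N + 1` of them replaces it by the full count, which cancels
the denominator and leaves `E[1{count ≠ 0}] ≤ 1`.
-/

open Finset

theorem card_filter_univ_castSucc {n : ℕ} (p : Fin (n + 1) → Prop) [DecidablePred p] :
    #{i | p i} = #{i : Fin n | p i.castSucc} + if p (Fin.last n) then 1 else 0 := by
  simp only [card_filter, Fin.sum_univ_castSucc]

theorem card_filter_comp_perm {ι : Type*} [Fintype ι] (σ : Equiv.Perm ι) (p : ι → Prop)
    [DecidablePred p] : #{i | p (σ i)} = #{i | p i} := by
  simp only [card_filter, Equiv.sum_comp σ fun i => if p i then 1 else 0]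

section IidWeight

variable {ι Y : Type*} [Fintype ι] (P : Y → ℝ)

def iidWeight (ω : ι → Y) : ℝ := ∏ i, P (ω i)

theorem iidWeight_nonneg (hP : ∀ y, 0 ≤ P y) (ω : ι → Y) : 0 ≤ iidWeight P ω :=
  prod_nonneg fun i _ => hP (ω i)

theorem iidWeight_comp_perm (σ : Equiv.Perm ι) (ω : ι → Y) :
    iidWeight P (ω ∘ σ) = iidWeight P ω :=
  Equiv.prod_comp σ fun i => P (ω i)

variable [DecidableEq ι] [Fintype Y]

theorem sum_iidWeight : ∑ ω : ι → Y, iidWeight P ω = (∑ y, P y) ^ Fintype.card ι := by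
  unfold iidWeight
  rw [← Fintype.prod_sum (fun (_ : ι) (y : Y) => P y), prod_const, card_univ]

theorem sum_iidWeight_mul_comp_perm (σ : Equiv.Perm ι) (F : (ι → Y) → ℝ) :
    ∑ ω : ι → Y, iidWeight P ω * F (ω ∘ σ) = ∑ ω : ι → Y, iidWeight P ω * F ω :=
  Fintype.sum_equiv (σ.symm.arrowCongr (Equiv.refl Y)) _ _ fun ω => by
    rw [← iidWeight_comp_perm P σ ω]
    rfl

theorem sum_iidWeight_fin_succ {n : ℕ} (F : (Fin n → Y) → Y → ℝ) :
    ∑ ω : Fin (n + 1) → Y, iidWeight P ω * F (Fin.init ω) (ω (Fin.last n)) =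
      ∑ ω : Fin n → Y, iidWeight P ω * ∑ z, P z * F ω z := by
  rw [← (Fin.snocEquiv fun _ => Y).sum_comp, Fintype.sum_prod_type, sum_comm]
  refine sum_congr rfl fun ω _ => ?_
  rw [mul_sum]
  refine sum_congr rfl fun z _ => ?_
  simp only [iidWeight, Fin.snocEquiv, Equiv.coe_fn_mk, Fin.prod_univ_castSucc, Fin.snoc_castSucc,
    Fin.snoc_last, Fin.init_snoc]
  ring

variable [DecidableEq Y]

theorem sum_iidWeight_mul_indicator_eq (h : ℕ → ℝ) (y : Y) (i j : ι) :
    ∑ ω : ι → Y, iidWeight P ω * h #{k | ω k = y} * (if ω i = y then 1 else 0) =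
      ∑ ω : ι → Y, iidWeight P ω * h #{k | ω k = y} * (if ω j = y then 1 else 0) := by
  have := sum_iidWeight_mul_comp_perm P (Equiv.swap i j)
    fun ω => h #{k | ω k = y} * if ω j = y then 1 else 0
  simpa only [mul_assoc, Function.comp_apply, Equiv.swap_apply_right,
    card_filter_comp_perm (Equiv.swap i j) fun k => _ = y] using this

theorem card_mul_sum_iidWeight_mul_indicator (h : ℕ → ℝ) (y : Y) (i : ι) :
    Fintype.card ι *
        ∑ ω : ι → Y, iidWeight P ω * h #{k | ω k = y} * (if ω i = y then 1 else 0) =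
      ∑ ω : ι → Y, iidWeight P ω * (h #{k | ω k = y} * #{k | ω k = y}) := by
  calc _ = ∑ j : ι, ∑ ω : ι → Y,
        iidWeight P ω * h #{k | ω k = y} * (if ω j = y then 1 else 0) := by
        simp only [sum_iidWeight_mul_indicator_eq P h y _ i, sum_const, card_univ, nsmul_eq_mul]
    _ = _ := by
        rw [sum_comm]
        refine sum_congr rfl fun ω _ => ?_
        rw [← mul_sum, card_filter]
        push_cast
        ring

theorem sum_iidWeight_mul_card_div_count_le_one (hP : ∀ y, 0 ≤ P y) (hPsum : ∑ y, P y = 1)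
    (y : Y) (i : ι) :
    ∑ ω : ι → Y, iidWeight P ω * (Fintype.card ι / #{k | ω k = y}) *
      (if ω i = y then 1 else 0) ≤ 1 := by
  calc _ = Fintype.card ι * ∑ ω : ι → Y,
        iidWeight P ω * (#{k | ω k = y} : ℝ)⁻¹ * (if ω i = y then 1 else 0) := by
        rw [mul_sum]
        exact sum_congr rfl fun ω _ => by ring
    _ = ∑ ω : ι → Y, iidWeight P ω * ((#{k | ω k = y} : ℝ)⁻¹ * #{k | ω k = y}) :=
        card_mul_sum_iidWeight_mul_indicator P (fun k => (k : ℝ)⁻¹) y i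
    _ ≤ ∑ ω : ι → Y, iidWeight P ω :=
        sum_le_sum fun ω _ => mul_le_of_le_one_right (iidWeight_nonneg P hP ω)
          (inv_mul_le_one_of_le₀ le_rfl (Nat.cast_nonneg _))
    _ = 1 := by rw [sum_iidWeight, hPsum, one_pow]

end IidWeight

theorem conformal_e_prediction_validity_general
    {Y : Type*} [Fintype Y] [DecidableEq Y]
    (P : Y → ℝ) (hPpos : ∀ y, 0 < P y) (hPsum : ∑ y, P y = 1)
    (N : ℕ) (y : Y) :
    ∑ ω : Fin (N + 1) → Y, (∏ n, P (ω n)) *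
      ((N + 1 : ℝ) /
        (((univ.filter (fun n : Fin N => ω n.castSucc = y)).card : ℝ) + 1))
      ≤ 1 / P y := by
  set e : (Fin N → Y) → ℝ := fun ω => (N + 1) / (#{n | ω n = y} + 1)
  have hdrop : ∑ ω : Fin (N + 1) → Y, iidWeight P ω * e (Fin.init ω) =
      ∑ ω : Fin N → Y, iidWeight P ω * e ω := by
    simpa only [← sum_mul, hPsum, one_mul] using sum_iidWeight_fin_succ P fun ω _ => e ω
  have hcond : ∑ ω : Fin (N + 1) → Y,
      iidWeight P ω * (Fintype.card (Fin (N + 1)) / #{k | ω k = y}) *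
        (if ω (Fin.last N) = y then 1 else 0) =
      P y * ∑ ω : Fin N → Y, iidWeight P ω * e ω := by
    simp only [mul_assoc, card_filter_univ_castSucc fun k => _ = y, Fintype.card_fin]
    refine (sum_iidWeight_fin_succ P fun ω z => ((N + 1 : ℕ) : ℝ) /
      (#{n | ω n = y} + if z = y then 1 else 0 : ℕ) * if z = y then 1 else 0).trans ?_
    simp only [mul_ite, mul_one, mul_zero, sum_ite_eq', mem_univ, if_true, mul_sum, e]
    refine sum_congr rfl fun ω _ => ?_
    push_cast
    ring
  rw [le_div_iff₀ (hPpos y), mul_comm]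
  calc _ = P y * ∑ ω : Fin N → Y, iidWeight P ω * e ω := by rw [← hdrop]; rfl
    _ ≤ 1 := hcond ▸ sum_iidWeight_mul_card_div_count_le_one P (fun z => (hPpos z).le) hPsum y _

/-- Simple conformal e-prediction validity: for an i.i.d. sample `Y₁,…,Y_{N+1}`
from a positive probability measure `P` on a finite nonempty type `Y`,
`E[(N+1)/(|{n ∈ [N] : Yₙ = y}|+1)] ≤ 1/P({y})`. -/
theorem conformal_e_prediction_validity
    {Y : Type*} [Fintype Y] [Nonempty Y] [DecidableEq Y]
    (P : Y → ℝ) (hPpos : ∀ y, 0 < P y) (hPsum : ∑ y, P y = 1)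
    (N : ℕ) (y : Y) :
    ∑ ω : Fin (N + 1) → Y, (∏ n, P (ω n)) *
      ((N + 1 : ℝ) /
        (((univ.filter (fun n : Fin N => ω n.castSucc = y)).card : ℝ) + 1))
      ≤ 1 / P y :=
  conformal_e_prediction_validity_general P hPpos hPsum N y
end

section
/- Let Y be a finite nonempty type, P a positive probability measure on Y, and Y_1,...,Y_{N+1} i.i.d. from P. Define the estimate P_hat({y}) := (|{n in [N] : Y_n = y}| + 1)/(N+1). Then for any probability measure Q on Y, E[ Q({Y_{N+1}})/P_hat({Y_{N+1}}) ] <= 1, i.e. this ratio is an e-variable. -/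
open Finset

/-! With the test point included, `(N+1) P̂({y})` is the number of `n ≤ N+1` with `Yₙ = y`.
The product weight and these counts are invariant under permuting the sample, so
`E[Q(Yᵢ)/#{n | Yₙ = Yᵢ}]` does not depend on `i`. Summing over `i`, the ratio's expectation is
`E[∑ᵢ Q(Yᵢ)/#{n | Yₙ = Yᵢ}] = E[∑_{y observed} Q y] ≤ 1`. -/

section Exchangeable

variable {ι Y : Type*} [Fintype ι]

def IsExchangeable (μ : (ι → Y) → ℝ) : Prop :=
  ∀ (σ : Equiv.Perm ι) (ω : ι → Y), μ (ω ∘ σ) = μ ω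

theorem isExchangeable_prod (P : Y → ℝ) : IsExchangeable fun ω : ι → Y => ∏ i, P (ω i) :=
  fun σ ω => Equiv.prod_comp σ (fun i => P (ω i))

theorem sum_prod_eq_one [Fintype Y] [DecidableEq ι] {P : Y → ℝ} (hP : ∑ y, P y = 1) :
    ∑ ω : ι → Y, ∏ i, P (ω i) = 1 := by
  rw [← Fintype.prod_sum (fun _ : ι => P), hP, prod_const_one]

theorem card_filter_comp_perm_s1 [DecidableEq Y] (ω : ι → Y) (σ : Equiv.Perm ι) (y : Y) :
    #{i | (ω ∘ σ) i = y} = #{i | ω i = y} :=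
  card_equiv σ (by simp)

theorem sum_apply_eq_of_perm_invariant [DecidableEq ι] [Fintype Y] {M : Type*} [AddCommMonoid M]
    (F : Y → (ι → Y) → M) (hF : ∀ (σ : Equiv.Perm ι) y ω, F y (ω ∘ σ) = F y ω) (i j : ι) :
    ∑ ω : ι → Y, F (ω i) ω = ∑ ω : ι → Y, F (ω j) ω := by
  refine Fintype.sum_equiv ((Equiv.swap i j).arrowCongr (Equiv.refl Y)) _ _ fun ω => ?_
  simpa [Equiv.arrowCongr] using (hF (Equiv.swap i j) (ω i) ω).symm

theorem sum_div_card_fiber_eq_sum_image [DecidableEq Y] {K : Type*} [Semifield K] [CharZero K]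
    (f : Y → K) (ω : ι → Y) :
    ∑ i, f (ω i) / #{j | ω j = ω i} = ∑ y ∈ univ.image ω, f y := by
  rw [sum_comp (fun y => f y / #{j | ω j = y})]
  refine sum_congr rfl fun y hy => ?_
  have : (#{j | ω j = y} : K) ≠ 0 := by
    obtain ⟨j, -, rfl⟩ := mem_image.1 hy
    exact Nat.cast_ne_zero.2 (card_ne_zero_of_mem (mem_filter.2 ⟨mem_univ j, rfl⟩))
  rw [nsmul_eq_mul, mul_div_cancel₀ _ this]

theorem sum_mul_div_card_fiber_le_one [DecidableEq ι] [Fintype Y] [DecidableEq Y]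
    {μ : (ι → Y) → ℝ} (hμ : IsExchangeable μ) (hμ_nonneg : ∀ ω, 0 ≤ μ ω) (hμ_sum : ∑ ω, μ ω ≤ 1)
    {Q : Y → ℝ} (hQ_nonneg : ∀ y, 0 ≤ Q y) (hQ_sum : ∑ y, Q y ≤ 1) (i : ι) :
    ∑ ω, μ ω * (Q (ω i) / (#{j | ω j = ω i} / Fintype.card ι)) ≤ 1 := by
  set G : Y → (ι → Y) → ℝ := fun y ω => μ ω * (Q y / #{j | ω j = y})
  have hG : ∀ (σ : Equiv.Perm ι) y ω, G y (ω ∘ σ) = G y ω := by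
    intro σ y ω
    simp only [G, hμ σ ω, card_filter_comp_perm_s1]
  calc ∑ ω, μ ω * (Q (ω i) / (#{j | ω j = ω i} / Fintype.card ι))
      = ∑ _j : ι, ∑ ω, G (ω i) ω := by
        rw [sum_const, card_univ, nsmul_eq_mul, mul_sum]
        refine sum_congr rfl fun ω _ => ?_
        rw [div_div_eq_mul_div]
        ring
    _ = ∑ ω, μ ω * ∑ y ∈ univ.image ω, Q y := by
        rw [sum_congr rfl fun j _ => sum_apply_eq_of_perm_invariant G hG i j, sum_comm]
        refine sum_congr rfl fun ω _ => ?_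
        rw [← sum_div_card_fiber_eq_sum_image, mul_sum]
    _ ≤ ∑ ω, μ ω * 1 := by
        gcongr with ω
        · exact hμ_nonneg ω
        · exact (sum_le_univ_sum_of_nonneg hQ_nonneg).trans hQ_sum
    _ ≤ 1 := by simpa using hμ_sum

end Exchangeable

theorem card_filter_castSucc_add_one {Y : Type*} [DecidableEq Y] {N : ℕ} (ω : Fin (N + 1) → Y) :
    #{n : Fin N | ω n.castSucc = ω (Fin.last N)} + 1 = #{n | ω n = ω (Fin.last N)} := by
  rw [card_filter, card_filter, Fin.sum_univ_castSucc, if_pos rfl]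

theorem conformal_e_variable_general
    {Y : Type*} [Fintype Y] [DecidableEq Y]
    (P : Y → ℝ) (hPpos : ∀ y, 0 < P y) (hPsum : ∑ y, P y = 1)
    (Q : Y → ℝ) (hQnonneg : ∀ y, 0 ≤ Q y) (hQsum : ∑ y, Q y = 1)
    (N : ℕ) :
    ∑ ω : Fin (N + 1) → Y, (∏ n, P (ω n)) *
      (Q (ω (Fin.last N)) /
        ((((univ.filter (fun n : Fin N => ω n.castSucc = ω (Fin.last N))).card : ℝ) + 1)
          / (N + 1)))
      ≤ 1 := by
  have hcount (ω : Fin (N + 1) → Y) :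
      (#{n : Fin N | ω n.castSucc = ω (Fin.last N)} : ℝ) + 1 = #{n | ω n = ω (Fin.last N)} := by
    exact_mod_cast card_filter_castSucc_add_one ω
  simp only [hcount]
  simpa using sum_mul_div_card_fiber_le_one (isExchangeable_prod P)
    (fun ω => prod_nonneg fun n _ => (hPpos (ω n)).le) (sum_prod_eq_one hPsum).le
    hQnonneg hQsum.le (Fin.last N)

/-- For an i.i.d. sample `Y₁,…,Y_{N+1}` from a positive probability measure `P`
on a finite nonempty type, with the estimate `P̂({y}) = (|{n ∈ [N] : Yₙ = y}|+1)/(N+1)`,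
for any probability measure `Q` on `Y` we have `E[Q({Y_{N+1}})/P̂({Y_{N+1}})] ≤ 1`. -/
theorem conformal_e_variable
    {Y : Type*} [Fintype Y] [Nonempty Y] [DecidableEq Y]
    (P : Y → ℝ) (hPpos : ∀ y, 0 < P y) (hPsum : ∑ y, P y = 1)
    (Q : Y → ℝ) (hQnonneg : ∀ y, 0 ≤ Q y) (hQsum : ∑ y, Q y = 1)
    (N : ℕ) :
    ∑ ω : Fin (N + 1) → Y, (∏ n, P (ω n)) *
      (Q (ω (Fin.last N)) /
        ((((univ.filter (fun n : Fin N => ω n.castSucc = ω (Fin.last N))).card : ℝ) + 1)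
          / (N + 1)))
      ≤ 1 :=
  conformal_e_variable_general P hPpos hPsum Q hQnonneg hQsum N
end

section
/- Let X and Y be finite nonempty types, P a positive probability measure on X × Y, and (X_1,Y_1),...,(X_{N+1},Y_{N+1}) i.i.d. from P. Fix x in X and y in Y. Then, conditionally on X_1,...,X_N, E[ (|{n in [N] : X_n = x}| + 1)/(|{n in [N] : (X_n,Y_n) = (x,y)}| + 1) | X_1,...,X_N ] <= 1/P(Y = y | X = x). -/
/-!
Conditionally on the objects, the number `S` of examples equal to `(x, y)` is a sum of independent
Bernoulli variables, `K = #{n | xₙ = x}` of them with success probability `q = P(Y = y ∣ X = x)`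
and the others identically zero, so `E[t ^ S] = (1 - q + q t) ^ K`. Writing
`1 / (S + 1) = ∫₀¹ t ^ S dt` and exchanging sum and integral gives
`(K + 1) E[1 / (S + 1)] = (K + 1) ∫₀¹ (1 - q + q t) ^ K dt = (1 - (1 - q) ^ (K + 1)) / q`,
which is at most `1 / q`.
-/

open Finset

section

variable {ι κ R : Type*} [Fintype ι] [DecidableEq ι] [Fintype κ] [CommSemiring R]

theorem sum_prod_mul_pow_card_filter (w : ι → κ → R) (A : ι → κ → Prop)
    [∀ i, DecidablePred (A i)] (t : R) :
    ∑ g : ι → κ, (∏ i, w i (g i)) * t ^ #{i | A i (g i)} =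
      ∏ i, ∑ j, w i j * if A i j then t else 1 := by
  rw [Fintype.prod_sum]
  refine sum_congr rfl fun g _ => ?_
  rw [prod_mul_distrib, prod_ite, prod_const, prod_const_one, mul_one]

end

theorem sum_mul_ite_eq_one_sub_add_mul {κ R : Type*} [Fintype κ] [DecidableEq κ] [CommRing R]
    (w : κ → R) (hw : ∑ j, w j = 1) (y : κ) (t : R) :
    ∑ j, w j * (if j = y then t else 1) = 1 - w y + w y * t := by
  have hsplit : ∀ j,
      w j * (if j = y then t else 1) = w j + if j = y then w j * (t - 1) else 0 := by
    intro j
    split_ifs <;> ring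
  rw [sum_congr rfl fun j _ => hsplit j, sum_add_distrib, hw, sum_ite_eq' univ y,
    if_pos (mem_univ y)]
  ring

theorem sum_div_add_one_eq_integral {α : Type*} (s : Finset α) (c : α → ℝ) (S : α → ℕ) :
    ∑ a ∈ s, c a / (S a + 1) = ∫ t in (0 : ℝ)..1, ∑ a ∈ s, c a * t ^ S a := by
  rw [intervalIntegral.integral_finsetSum (f := fun a t => c a * t ^ S a) fun a _ =>
    (continuous_const.mul (continuous_pow (S a))).intervalIntegrable 0 1]
  refine sum_congr rfl fun a _ => ?_
  simp [div_eq_mul_inv]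

theorem add_one_mul_integral_one_sub_add_mul_pow {q : ℝ} (hq : q ≠ 0) (K : ℕ) :
    (K + 1) * ∫ t in (0 : ℝ)..1, (1 - q + q * t) ^ K = (1 - (1 - q) ^ (K + 1)) / q := by
  rw [intervalIntegral.integral_comp_add_mul (fun u => u ^ K) hq, integral_pow, smul_eq_mul,
    mul_one, mul_zero, add_zero, sub_add_cancel, one_pow]
  field_simp

section

variable {X Y : Type*} [Fintype Y]

noncomputable def condProb (P : X × Y → ℝ) (a : X) (b : Y) : ℝ :=
  P (a, b) / ∑ b', P (a, b')

variable [Nonempty Y] {P : X × Y → ℝ} {a : X}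

theorem row_sum_pos (hP : ∀ b, 0 < P (a, b)) : 0 < ∑ b, P (a, b) :=
  sum_pos (fun b _ => hP b) univ_nonempty

theorem condProb_pos (hP : ∀ b, 0 < P (a, b)) (b : Y) : 0 < condProb P a b :=
  div_pos (hP b) (row_sum_pos hP)

theorem condProb_le_one (hP : ∀ b, 0 < P (a, b)) (b : Y) : condProb P a b ≤ 1 :=
  (div_le_one (row_sum_pos hP)).2 (single_le_sum (fun b _ => (hP b).le) (mem_univ b))

theorem sum_condProb (hP : ∀ b, 0 < P (a, b)) : ∑ b, condProb P a b = 1 := by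
  simp only [condProb]
  rw [← sum_div, div_self (row_sum_pos hP).ne']

end

theorem sum_prod_condProb_mul_pow_card {X Y : Type*} [DecidableEq X] [Fintype Y]
    [DecidableEq Y] {P : X × Y → ℝ} (hP : ∀ p, 0 < P p) {N : ℕ} (xs : Fin N → X)
    (x : X) (y : Y) (t : ℝ) :
    ∑ ys : Fin N → Y, (∏ n, condProb P (xs n) (ys n)) * t ^ #{n | (xs n, ys n) = (x, y)} =
      (1 - condProb P x y + condProb P x y * t) ^ #{n | xs n = x} := by
  have : Nonempty Y := ⟨y⟩
  rw [sum_prod_mul_pow_card_filter (fun n => condProb P (xs n)) fun n b => (xs n, b) = (x, y),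
    ← prod_const, prod_filter]
  refine prod_congr rfl fun n _ => ?_
  by_cases hn : xs n = x
  · simp only [hn, Prod.mk.injEq, true_and, if_true]
    exact sum_mul_ite_eq_one_sub_add_mul _ (sum_condProb fun b => hP _) y t
  · simp only [hn, Prod.mk.injEq, false_and, if_false, mul_one]
    exact sum_condProb fun b => hP _

theorem conditional_conformal_e_prediction_validity_general
    {X Y : Type*} [Fintype Y]
    [DecidableEq X] [DecidableEq Y]
    (P : X × Y → ℝ) (hPpos : ∀ p, 0 < P p)
    (N : ℕ) (x : X) (y : Y) (xs : Fin N → X) :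
    ∑ ys : Fin N → Y,
      (∏ n, P (xs n, ys n) / ∑ y', P (xs n, y')) *
        ((((univ.filter (fun n : Fin N => xs n = x)).card : ℝ) + 1) /
          (((univ.filter (fun n : Fin N => (xs n, ys n) = (x, y))).card : ℝ) + 1))
      ≤ 1 / (P (x, y) / ∑ y', P (x, y')) := by
  have : Nonempty Y := ⟨y⟩
  set K := #{n | xs n = x} with hK
  set q := condProb P x y with hq
  have hq_pos : 0 < q := condProb_pos (fun b => hPpos _) y
  have hq_le_one : q ≤ 1 := condProb_le_one (fun b => hPpos _) y
  calc ∑ ys : Fin N → Y, (∏ n, condProb P (xs n) (ys n)) *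
        ((K + 1 : ℝ) / (#{n | (xs n, ys n) = (x, y)} + 1))
      = (K + 1) * ∑ ys : Fin N → Y,
          (∏ n, condProb P (xs n) (ys n)) / (#{n | (xs n, ys n) = (x, y)} + 1) := by
        simp only [mul_sum, mul_div_left_comm]
    _ = (K + 1) * ∫ t in (0 : ℝ)..1, (1 - q + q * t) ^ K := by
        simp only [sum_div_add_one_eq_integral, sum_prod_condProb_mul_pow_card hPpos, ← hK,
          ← hq]
    _ = (1 - (1 - q) ^ (K + 1)) / q := add_one_mul_integral_one_sub_add_mul_pow hq_pos.ne' K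
    _ ≤ 1 / q := by
        gcongr
        exact sub_le_self 1 (pow_nonneg (sub_nonneg.2 hq_le_one) _)

/-- Object-conditional conformal e-prediction validity. For an i.i.d. sample
`(X₁,Y₁),…,(X_{N+1},Y_{N+1})` from a positive probability measure `P` on `X × Y`,
conditionally on the objects `X₁,…,X_N` (i.e., for any fixed values `xs` of the
objects, the labels being independent with law `P(·∣Xₙ)`),
`E[(|{n : Xₙ = x}|+1)/(|{n : (Xₙ,Yₙ) = (x,y)}|+1) ∣ X₁,…,X_N] ≤ 1/P(Y=y ∣ X=x)`. -/
theorem conditional_conformal_e_prediction_validity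
    {X Y : Type*} [Fintype X] [Nonempty X] [Fintype Y] [Nonempty Y]
    [DecidableEq X] [DecidableEq Y]
    (P : X × Y → ℝ) (hPpos : ∀ p, 0 < P p) (hPsum : ∑ p, P p = 1)
    (N : ℕ) (x : X) (y : Y) (xs : Fin N → X) :
    ∑ ys : Fin N → Y,
      (∏ n, P (xs n, ys n) / ∑ y', P (xs n, y')) *
        ((((univ.filter (fun n : Fin N => xs n = x)).card : ℝ) + 1) /
          (((univ.filter (fun n : Fin N => (xs n, ys n) = (x, y))).card : ℝ) + 1))
      ≤ 1 / (P (x, y) / ∑ y', P (x, y')) :=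
  conditional_conformal_e_prediction_validity_general P hPpos N x y xs
end

section
/- Let X and Y be finite nonempty types. Suppose X_1,...,X_{N+1} are arbitrary random variables in X, and conditionally on (X_1,...,X_{N+1}) the labels Y_1,...,Y_{N+1} are independent with Y_n distributed according to a fixed conditional law Q(· | X_n) with Q(y|x) > 0 for all x,y. Fix x, y. Then E[ (|{n in [N] : X_n = x}| + 1)/(|{n in [N] : (X_n,Y_n) = (x,y)}| + 1) | X_1,...,X_N ] <= 1/Q(y|x). -/
/-!
Append a test example with object `x` to the `N` given ones, so that `k + 1` positions carry
object `x`. Conditionally on the objects, the labels at these positions are exchangeable, so the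
conformal e-value `(k + 1) [Y_m = y] / #{i | (X_i, Y_i) = (x, y)}` has the same expectation at
each of them; as these `k + 1` e-values sum to at most `k + 1` pointwise, each has expectation at
most `1`. At the test position only the test label `y` contributes, with probability `Q(y|x)`,
and what remains is `Q(y|x)` times the left-hand side.
-/

open Finset

section LabelExchangeability

variable {I X Y : Type*} [Fintype I]

theorem sum_prod_kernel_eq_one [DecidableEq I] [Fintype Y] {Q : X → Y → ℝ}
    (hQsum : ∀ x, ∑ y, Q x y = 1) (xs : I → X) : ∑ ys : I → Y, ∏ i, Q (xs i) (ys i) = 1 := by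
  rw [← Fintype.prod_sum]
  simp [hQsum]

theorem prod_kernel_comp_perm (Q : X → Y → ℝ) {xs : I → X} {σ : Equiv.Perm I}
    (hσ : ∀ i, xs (σ i) = xs i) (ys : I → Y) :
    ∏ i, Q (xs i) (ys (σ i)) = ∏ i, Q (xs i) (ys i) :=
  calc ∏ i, Q (xs i) (ys (σ i)) = ∏ i, Q (xs (σ i)) (ys (σ i)) := by simp only [hσ]
    _ = ∏ i, Q (xs i) (ys i) := Equiv.prod_comp σ fun i => Q (xs i) (ys i)

theorem sum_prod_kernel_mul_comp_perm [DecidableEq I] [Fintype Y] (Q : X → Y → ℝ) {xs : I → X}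
    {σ : Equiv.Perm I} (hσ : ∀ i, xs (σ i) = xs i) (F : (I → Y) → ℝ) :
    ∑ ys : I → Y, (∏ i, Q (xs i) (ys i)) * F (ys ∘ σ) =
      ∑ ys : I → Y, (∏ i, Q (xs i) (ys i)) * F ys := by
  refine Fintype.sum_equiv (σ.symm.arrowCongr (Equiv.refl Y)) _ _ fun ys => ?_
  change _ = (∏ i, Q (xs i) (ys (σ i))) * F (ys ∘ σ)
  rw [prod_kernel_comp_perm Q hσ]

theorem card_filter_comp_perm_s3 [DecidableEq X] [DecidableEq Y] {xs : I → X} {σ : Equiv.Perm I}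
    (hσ : ∀ i, xs (σ i) = xs i) (ys : I → Y) (x : X) (y : Y) :
    #{i | (xs i, ys (σ i)) = (x, y)} = #{i | (xs i, ys i) = (x, y)} := by
  calc #{i | (xs i, ys (σ i)) = (x, y)} = #{i | (xs (σ i), ys (σ i)) = (x, y)} := by
        simp only [hσ]
    _ = #{i | (xs i, ys i) = (x, y)} := by
        simp only [card_filter]
        exact Equiv.sum_comp σ fun i => if (xs i, ys i) = (x, y) then 1 else 0

end LabelExchangeability

section ConformalEValue

variable {I X Y : Type*} [Fintype I] [DecidableEq X] [DecidableEq Y]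

-- For `xs m = x` the denominator counts position `m` whenever the numerator is nonzero,
-- so the convention `a / 0 = 0` only applies where the value is `0` anyway.
noncomputable def conformalEValue (xs : I → X) (x : X) (y : Y) (m : I) (ys : I → Y) : ℝ :=
  (#{i | xs i = x} : ℝ) * (if ys m = y then 1 else 0) / #{i | (xs i, ys i) = (x, y)}

theorem sum_conformalEValue_le (xs : I → X) (x : X) (y : Y) (ys : I → Y) :
    ∑ m ∈ {i | xs i = x}, conformalEValue xs x y m ys ≤ #{i | xs i = x} := by
  have hcount : ∑ m ∈ {i | xs i = x}, (if ys m = y then (1 : ℝ) else 0) =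
      #{i | (xs i, ys i) = (x, y)} := by
    rw [sum_boole, filter_filter]
    simp only [Prod.mk.injEq]
  simp only [conformalEValue, ← sum_div, ← mul_sum, hcount, mul_div_assoc]
  exact mul_le_of_le_one_right (Nat.cast_nonneg _) (div_self_le_one _)

theorem sum_prod_kernel_mul_conformalEValue_eq_of_eq [DecidableEq I] [Fintype Y]
    (Q : X → Y → ℝ) {xs : I → X} {m m' : I} (hm : xs m = xs m') (x : X) (y : Y) :
    ∑ ys : I → Y, (∏ i, Q (xs i) (ys i)) * conformalEValue xs x y m ys =
      ∑ ys : I → Y, (∏ i, Q (xs i) (ys i)) * conformalEValue xs x y m' ys := by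
  have hσ := Equiv.apply_swap_eq_self hm
  rw [← sum_prod_kernel_mul_comp_perm Q hσ]
  simp only [conformalEValue, Function.comp_apply, Equiv.swap_apply_left,
    card_filter_comp_perm_s3 hσ]

theorem sum_prod_kernel_mul_conformalEValue_le_one [DecidableEq I] [Fintype Y] {Q : X → Y → ℝ}
    (hQ : ∀ x y, 0 ≤ Q x y) (hQsum : ∀ x, ∑ y, Q x y = 1) (xs : I → X) {x : X} (y : Y) {m : I}
    (hm : xs m = x) :
    ∑ ys : I → Y, (∏ i, Q (xs i) (ys i)) * conformalEValue xs x y m ys ≤ 1 := by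
  have hpos : (0 : ℝ) < #{i | xs i = x} := Nat.cast_pos.2 (card_pos.2 ⟨m, by simp [hm]⟩)
  refine le_of_mul_le_mul_left ?_ hpos
  calc (#{i | xs i = x} : ℝ) * ∑ ys : I → Y, (∏ i, Q (xs i) (ys i)) * conformalEValue xs x y m ys
      = ∑ m' ∈ {i | xs i = x},
          ∑ ys : I → Y, (∏ i, Q (xs i) (ys i)) * conformalEValue xs x y m' ys := by
        rw [sum_congr rfl fun m' hm' => sum_prod_kernel_mul_conformalEValue_eq_of_eq Q
          ((mem_filter.1 hm').2.trans hm.symm) x y, sum_const, nsmul_eq_mul]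
    _ = ∑ ys : I → Y, (∏ i, Q (xs i) (ys i)) *
          ∑ m' ∈ {i | xs i = x}, conformalEValue xs x y m' ys := by
        rw [sum_comm]
        simp only [mul_sum]
    _ ≤ ∑ ys : I → Y, (∏ i, Q (xs i) (ys i)) * #{i | xs i = x} :=
        sum_le_sum fun ys _ => mul_le_mul_of_nonneg_left (sum_conformalEValue_le xs x y ys)
          (prod_nonneg fun i _ => hQ _ _)
    _ = #{i | xs i = x} * 1 := by rw [← sum_mul, sum_prod_kernel_eq_one hQsum, one_mul, mul_one]

end ConformalEValue

section TestPoint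

variable {I X Y : Type*} [Fintype I]

theorem card_filter_univ_option (p : Option I → Prop) [DecidablePred p] :
    #{i | p i} = #{i | p (some i)} + if p none then 1 else 0 := by
  simp only [card_filter, Fintype.sum_option, add_comm]

theorem conformalEValue_option_elim [DecidableEq X] [DecidableEq Y] (xs : I → X) (x : X)
    (y₀ y : Y) (ys : I → Y) :
    conformalEValue (fun i => i.elim x xs) x y none (fun i => i.elim y₀ ys) =
      if y₀ = y then ((#{i | xs i = x} : ℝ) + 1) / (#{i | (xs i, ys i) = (x, y)} + 1) else 0 := by
  split_ifs with hy
  · subst hy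
    simp only [conformalEValue, card_filter_univ_option, Option.elim_none, Option.elim_some,
      if_true, Nat.cast_add, Nat.cast_one, mul_one]
    rfl -- the two sides differ only in their `Decidable` instances
  · simp [conformalEValue, hy]

theorem sum_prod_kernel_option_elim [DecidableEq I] [Fintype Y] (Q : X → Y → ℝ) (x₀ : X)
    (xs : I → X) (F : (Option I → Y) → ℝ) :
    ∑ ys : Option I → Y, (∏ i, Q (i.elim x₀ xs) (ys i)) * F ys =
      ∑ y₀ : Y, ∑ ys : I → Y, Q x₀ y₀ * (∏ i, Q (xs i) (ys i)) * F (fun i => i.elim y₀ ys) := by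
  rw [← Fintype.sum_prod_type']
  refine Fintype.sum_equiv Equiv.piOptionEquivProd _ _ fun ys => ?_
  have hys : (fun i : Option I => i.elim (ys none) fun i => ys (some i)) = ys :=
    funext fun i => by cases i <;> rfl
  simp only [Equiv.piOptionEquivProd_apply, Fintype.prod_option, Option.elim_none,
    Option.elim_some, hys, mul_assoc]

end TestPoint

theorem conditional_conformal_arbitrary_objects_general
    {X Y : Type*} [Fintype Y]
    [DecidableEq X] [DecidableEq Y]
    (Q : X → Y → ℝ) (hQpos : ∀ x y, 0 < Q x y) (hQsum : ∀ x, ∑ y, Q x y = 1)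
    (N : ℕ) (x : X) (y : Y) (xs : Fin N → X) :
    ∑ ys : Fin N → Y,
      (∏ n, Q (xs n) (ys n)) *
        ((((univ.filter (fun n : Fin N => xs n = x)).card : ℝ) + 1) /
          (((univ.filter (fun n : Fin N => (xs n, ys n) = (x, y))).card : ℝ) + 1))
      ≤ 1 / Q x y := by
  rw [le_div_iff₀ (hQpos x y)]
  calc _ = ∑ ys : Option (Fin N) → Y, (∏ i, Q (i.elim x xs) (ys i)) *
          conformalEValue (fun i => i.elim x xs) x y none ys := by
        rw [sum_prod_kernel_option_elim, Fintype.sum_eq_single y fun y₀ hy₀ => by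
          simp only [conformalEValue_option_elim, hy₀, if_false, mul_zero, sum_const_zero], sum_mul]
        refine sum_congr rfl fun ys _ => ?_
        rw [conformalEValue_option_elim, if_pos rfl]
        ring
    _ ≤ 1 := sum_prod_kernel_mul_conformalEValue_le_one (fun x y => (hQpos x y).le) hQsum _ y rfl

/-- Conditional conformal e-prediction validity with arbitrary objects: if the
objects `X₁,…,X_{N}` take arbitrary (fixed, i.e. conditioned-upon) values `xs`
and, given the objects, the labels `Y₁,…,Y_N` are independent with `Yₙ`
distributed as the fixed positive conditional law `Q(·∣Xₙ)`, then
`E[(|{n : Xₙ = x}|+1)/(|{n : (Xₙ,Yₙ) = (x,y)}|+1) ∣ X₁,…,X_N] ≤ 1/Q(y∣x)`. -/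
theorem conditional_conformal_arbitrary_objects
    {X Y : Type*} [Fintype X] [Nonempty X] [Fintype Y] [Nonempty Y]
    [DecidableEq X] [DecidableEq Y]
    (Q : X → Y → ℝ) (hQpos : ∀ x y, 0 < Q x y) (hQsum : ∀ x, ∑ y, Q x y = 1)
    (N : ℕ) (x : X) (y : Y) (xs : Fin N → X) :
    ∑ ys : Fin N → Y,
      (∏ n, Q (xs n) (ys n)) *
        ((((univ.filter (fun n : Fin N => xs n = x)).card : ℝ) + 1) /
          (((univ.filter (fun n : Fin N => (xs n, ys n) = (x, y))).card : ℝ) + 1))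
      ≤ 1 / Q x y :=
  conditional_conformal_arbitrary_objects_general Q hQpos hQsum N x y xs
end

section
/- Let X, Y, Z be finite nonempty types, P a positive probability measure on X × Y × Z, and (X_n,Y_n,Z_n), n = 1,...,N, an i.i.d. sample from P. Fix x in X and y in Y. Define p_y := sum_{z in Z} P(Z=z)·P(Y=y|X=x,Z=z) and F_y := sum_{z in Z} ((|{n : Z_n=z}|+1)/(N+1)) · ((|{n : (X_n,Y_n,Z_n)=(x,y,z)}|+1)/(|{n : (X_n,Z_n)=(x,z)}|+1)). Then E[ p_y / F_y ] <= 1. -/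
/-!
Fix a stratum `z` and the nested events `A = {(x, y, z)} ⊆ B = {X = x, Z = z} ⊆ C = {Z = z}`
with probabilities `α ≤ β ≤ γ`. The label of a sample (whether it lies in `C`, `B`, `A`) has
the same law as `(u, u ∧ v, u ∧ v ∧ w)` for independent Bernoulli bits with parameters `γ`,
`β / γ`, `α / β`, so the three sample counts become nested binomials. For `K ~ Bin(n, p)` one
has `E[1 / (K + 1)] ≤ 1 / ((n + 1) p)` (write `1 / (k + 1) = ∫₀¹ tᵏ dt`); applying this to the
`A`-count given the `B`-count and then to the `C`-count gives `E[p_{y,z} / F_{y,z}] ≤ 1`.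
Finally `p_y / F_y`, a ratio of sums, is at most the `p_{y,z}`-weighted mean of the ratios
`p_{y,z} / F_{y,z}` (Cauchy–Schwarz), which reduces the lemma to the strata.
-/

open Finset

def bernoulliMass (p : ℝ) (b : Bool) : ℝ := if b then p else 1 - p

section Bernoulli

variable {ι : Type*} [Fintype ι]

lemma prod_bernoulliMass_nonneg {p : ℝ} (hp0 : 0 ≤ p) (hp1 : p ≤ 1) (w : ι → Bool) :
    0 ≤ ∏ i, bernoulliMass p (w i) :=
  prod_nonneg fun i _ => by unfold bernoulliMass; split <;> linarith

variable [DecidableEq ι]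

lemma sum_prod_bernoulliMass (p : ℝ) : ∑ w : ι → Bool, ∏ i, bernoulliMass p (w i) = 1 := by
  rw [← Fintype.prod_sum (fun _ => bernoulliMass p)]
  simp [bernoulliMass]

lemma sum_prod_bernoulliMass_mul_pow_card (p t : ℝ) (s : Finset ι) :
    ∑ w : ι → Bool, (∏ i, bernoulliMass p (w i)) * t ^ #{i ∈ s | w i}
      = (p * t + (1 - p)) ^ #s := by
  have hpow : ∀ w : ι → Bool,
      t ^ #{i ∈ s | w i} = ∏ i, if i ∈ s then (if w i then t else 1) else 1 := by
    intro w
    rw [prod_ite_mem, univ_inter, ← prod_filter, prod_const]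
  simp only [hpow, ← prod_mul_distrib]
  rw [← Fintype.prod_sum fun i b => bernoulliMass p b * if i ∈ s then (if b then t else 1) else 1,
    ← prod_const, ← univ_inter s, ← prod_ite_mem]
  refine prod_congr rfl fun i _ => ?_
  by_cases hi : i ∈ s <;> simp [hi, bernoulliMass]

lemma sum_prod_bernoulliMass_div_card_succ_le {p : ℝ} (hp0 : 0 < p) (hp1 : p ≤ 1)
    (s : Finset ι) :
    ∑ w : ι → Bool, (∏ i, bernoulliMass p (w i)) / (#{i ∈ s | w i} + 1)
      ≤ 1 / ((#s + 1) * p) := by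
  have hbeta : ∀ (a : ℝ) (k : ℕ), a / ((k : ℝ) + 1) = a * ∫ t in (0 : ℝ)..1, t ^ k := by
    intro a k
    simp [integral_pow, div_eq_mul_inv]
  calc ∑ w : ι → Bool, (∏ i, bernoulliMass p (w i)) / (#{i ∈ s | w i} + 1)
      = ∫ t in (0 : ℝ)..1,
          ∑ w : ι → Bool, (∏ i, bernoulliMass p (w i)) * t ^ #{i ∈ s | w i} := by
        rw [intervalIntegral.integral_finsetSum fun w _ =>
          Continuous.intervalIntegrable (by fun_prop) _ _]
        simp only [hbeta, intervalIntegral.integral_const_mul]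
    _ = ∫ t in (0 : ℝ)..1, (p * t + (1 - p)) ^ #s := by
        simp only [sum_prod_bernoulliMass_mul_pow_card]
    _ = (1 - (1 - p) ^ (#s + 1)) / ((#s + 1) * p) := by
        rw [intervalIntegral.integral_comp_mul_add (fun x => x ^ #s) hp0.ne', integral_pow]
        simp only [smul_eq_mul, mul_one, mul_zero, zero_add, add_sub_cancel, one_pow]
        field_simp
    _ ≤ 1 / ((#s + 1) * p) := by
        gcongr
        have : 0 ≤ (1 - p) ^ (#s + 1) := pow_nonneg (by linarith) _
        linarith

end Bernoulli

section Pushforward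

variable {A B L : Type*} [Fintype A] [Fintype B] [Fintype L] [DecidableEq L] {N : ℕ}

lemma sum_prod_mul_comp_eq_sum_fiber (P : A → ℝ) (h : A → L) (G : (Fin N → L) → ℝ) :
    ∑ ω : Fin N → A, (∏ n, P (ω n)) * G (h ∘ ω)
      = ∑ σ : Fin N → L, (∏ n, ∑ a with h a = σ n, P a) * G σ := by
  rw [← sum_fiberwise univ (fun ω => h ∘ ω)]
  refine sum_congr rfl fun σ _ => ?_
  rw [prod_univ_sum, sum_mul]
  refine sum_congr ?_ fun ω hω => ?_
  · ext ω
    simp [Fintype.mem_piFinset, funext_iff]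
  · have hσ : h ∘ ω = σ := funext fun n => by simpa using Fintype.mem_piFinset.mp hω n
    rw [hσ]

lemma sum_prod_mul_comp_eq_of_law_eq {P : A → ℝ} {Q : B → ℝ} {h : A → L} {k : B → L}
    (hlaw : ∀ f : L → ℝ, ∑ a, P a * f (h a) = ∑ b, Q b * f (k b)) (G : (Fin N → L) → ℝ) :
    ∑ ω : Fin N → A, (∏ n, P (ω n)) * G (h ∘ ω)
      = ∑ τ : Fin N → B, (∏ n, Q (τ n)) * G (k ∘ τ) := by
  have hfiber : ∀ l, ∑ a with h a = l, P a = ∑ b with k b = l, Q b := by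
    intro l
    simpa [sum_filter] using hlaw fun l' => if l' = l then 1 else 0
  simp only [sum_prod_mul_comp_eq_sum_fiber, hfiber]

end Pushforward

lemma Fintype.sum_pi_prod_prod {ι α β γ M : Type*} [Fintype ι] [DecidableEq ι] [Fintype α]
    [Fintype β] [Fintype γ] [AddCommMonoid M] (F : (ι → α × β × γ) → M) :
    ∑ τ, F τ = ∑ u : ι → α, ∑ v : ι → β, ∑ w : ι → γ, F fun n => (u n, v n, w n) := by
  rw [← (Equiv.arrowProdEquivProdArrow _ _ _).symm.sum_comp, Fintype.sum_prod_type]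
  refine Fintype.sum_congr _ _ fun u => ?_
  rw [← (Equiv.arrowProdEquivProdArrow _ _ _).symm.sum_comp, Fintype.sum_prod_type]
  rfl

def collapse (b : Bool × Bool × Bool) : Bool × Bool × Bool :=
  (b.1, b.1 && b.2.1, b.1 && b.2.1 && b.2.2)

def bernoulliTriple (p q r : ℝ) (b : Bool × Bool × Bool) : ℝ :=
  bernoulliMass p b.1 * bernoulliMass q b.2.1 * bernoulliMass r b.2.2

def nestedLabel {A : Type*} (sA sB sC : A → Prop) [DecidablePred sA] [DecidablePred sB]
    [DecidablePred sC] (a : A) : Bool × Bool × Bool :=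
  (decide (sC a), decide (sB a), decide (sA a))

lemma sum_mul_nestedLabel_eq {A : Type*} [Fintype A] {P : A → ℝ} (hPsum : ∑ a, P a = 1)
    {sA sB sC : A → Prop} [DecidablePred sA] [DecidablePred sB] [DecidablePred sC]
    (hAB : ∀ a, sA a → sB a) (hBC : ∀ a, sB a → sC a)
    (hB : 0 < ∑ a with sB a, P a) (hC : 0 < ∑ a with sC a, P a)
    (f : Bool × Bool × Bool → ℝ) :
    ∑ a, P a * f (nestedLabel sA sB sC a)
      = ∑ b, bernoulliTriple (∑ a with sC a, P a) ((∑ a with sB a, P a) / ∑ a with sC a, P a)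
          ((∑ a with sA a, P a) / ∑ a with sB a, P a) b * f (collapse b) := by
  have hpt : ∀ a, P a * f (nestedLabel sA sB sC a)
      = P a * f (false, false, false)
        + (if sC a then P a else 0) * (f (true, false, false) - f (false, false, false))
        + (if sB a then P a else 0) * (f (true, true, false) - f (true, false, false))
        + (if sA a then P a else 0) * (f (true, true, true) - f (true, true, false)) := by
    intro a
    by_cases ha : sA a
    · simp [nestedLabel, ha, hAB a ha, hBC a (hAB a ha)]; ring
    by_cases hb : sB a
    · simp [nestedLabel, ha, hb, hBC a hb]; ring
    by_cases hc : sC a <;> simp [nestedLabel, ha, hb, hc]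
    ring
  simp only [hpt, sum_add_distrib, ← sum_mul, ← sum_filter, hPsum]
  simp [Fintype.sum_prod_type, bernoulliTriple, bernoulliMass, collapse]
  field_simp
  ring

noncomputable def countRatio {N : ℕ} (σ : Fin N → Bool × Bool × Bool) : ℝ :=
  (#{n | (σ n).2.1} + 1) / ((#{n | (σ n).1} + 1) * (#{n | (σ n).2.2} + 1))

lemma countRatio_collapse {N : ℕ} (u v w : Fin N → Bool) :
    countRatio (collapse ∘ fun n => (u n, v n, w n))
      = (#{n | u n && v n} + 1) /
          ((#{n | u n} + 1) * (#{n ∈ {n | u n && v n} | w n} + 1)) := by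
  simp only [countRatio, collapse, filter_filter, Function.comp, Bool.and_eq_true]
  congr!

lemma sum_prod_bernoulliTriple_mul_countRatio_le {N : ℕ} {p q r : ℝ} (hp0 : 0 < p)
    (hp1 : p ≤ 1) (hq0 : 0 ≤ q) (hq1 : q ≤ 1) (hr0 : 0 < r) (hr1 : r ≤ 1) :
    ∑ τ : Fin N → Bool × Bool × Bool,
        (∏ n, bernoulliTriple p q r (τ n)) * countRatio (collapse ∘ τ)
      ≤ 1 / ((N + 1) * p * r) := by
  rw [Fintype.sum_pi_prod_prod]
  calc _ = ∑ u : Fin N → Bool, (∏ n, bernoulliMass p (u n)) / (#{n | u n} + 1) *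
          ∑ v : Fin N → Bool, (∏ n, bernoulliMass q (v n)) * ((#{n | u n && v n} + 1) *
            ∑ w : Fin N → Bool,
              (∏ n, bernoulliMass r (w n)) / (#{n ∈ {n | u n && v n} | w n} + 1)) := by
        simp only [mul_sum]
        refine Fintype.sum_congr _ _ fun u => Fintype.sum_congr _ _ fun v =>
          Fintype.sum_congr _ _ fun w => ?_
        rw [countRatio_collapse]
        simp only [bernoulliTriple, prod_mul_distrib]
        field_simp
    _ ≤ ∑ u : Fin N → Bool, (∏ n, bernoulliMass p (u n)) / (#{n | u n} + 1) *
          ∑ v : Fin N → Bool, (∏ n, bernoulliMass q (v n)) * ((#{n | u n && v n} + 1) *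
            (1 / ((#{n | u n && v n} + 1) * r))) := by
        gcongr with u _ v _
        · exact div_nonneg (prod_bernoulliMass_nonneg hp0.le hp1 u) (by positivity)
        · exact prod_bernoulliMass_nonneg hq0 hq1 v
        · exact sum_prod_bernoulliMass_div_card_succ_le hr0 hr1 _
    _ = 1 / r * ∑ u : Fin N → Bool,
          (∏ n, bernoulliMass p (u n)) / (#{n ∈ univ | u n} + 1) := by
        have hcancel : ∀ u v : Fin N → Bool,
            ((#{n | u n && v n} : ℝ) + 1) * (1 / ((#{n | u n && v n} + 1) * r)) = 1 / r :=
          fun u v => by field_simp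
        simp only [hcancel, ← sum_mul, sum_prod_bernoulliMass, one_mul]
        rw [mul_comm]
    _ ≤ 1 / r * (1 / ((#(univ : Finset (Fin N)) + 1) * p)) := by
        gcongr
        exact sum_prod_bernoulliMass_div_card_succ_le hp0 hp1 _
    _ = 1 / ((N + 1) * p * r) := by
        rw [card_univ, Fintype.card_fin]
        field_simp

lemma sum_div_sum_le_sum_mul_div {ι : Type*} (s : Finset ι) {t U : ι → ℝ}
    (ht : ∀ i ∈ s, 0 ≤ t i) (hU : ∀ i ∈ s, 0 < U i) :
    (∑ i ∈ s, t i) / ∑ i ∈ s, U i ≤ ∑ i ∈ s, t i / (∑ j ∈ s, t j) * (t i / U i) := by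
  have hrhs : ∑ i ∈ s, t i / (∑ j ∈ s, t j) * (t i / U i)
      = (∑ i ∈ s, t i ^ 2 / U i) / ∑ j ∈ s, t j := by
    rw [sum_div]
    exact sum_congr rfl fun i _ => by ring
  have hlhs : (∑ i ∈ s, t i) / ∑ i ∈ s, U i
      = (∑ i ∈ s, t i) ^ 2 / (∑ i ∈ s, U i) / ∑ j ∈ s, t j := by
    rcases eq_or_ne (∑ i ∈ s, t i) 0 with h | h
    · simp [h]
    · field_simp
  rw [hrhs, hlhs]
  exact div_le_div_of_nonneg_right (sq_sum_div_le_sum_sq_div s t hU) (sum_nonneg ht)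

lemma sum_mul_sum_div_sum_le_one {Ω ι : Type*} [Fintype Ω] [Fintype ι] {Pr : Ω → ℝ}
    (hPr : ∀ ω, 0 ≤ Pr ω) {t : ι → ℝ} {U : Ω → ι → ℝ} (ht : ∀ i, 0 ≤ t i)
    (hU : ∀ ω i, 0 < U ω i) (h : ∀ i, ∑ ω, Pr ω * (t i / U ω i) ≤ 1) :
    ∑ ω, Pr ω * ((∑ i, t i) / ∑ i, U ω i) ≤ 1 := by
  calc ∑ ω, Pr ω * ((∑ i, t i) / ∑ i, U ω i)
      ≤ ∑ ω, Pr ω * ∑ i, t i / (∑ j, t j) * (t i / U ω i) := by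
        gcongr with ω
        · exact hPr ω
        · exact sum_div_sum_le_sum_mul_div _ (fun i _ => ht i) fun i _ => hU ω i
    _ = ∑ i, t i / (∑ j, t j) * ∑ ω, Pr ω * (t i / U ω i) := by
        simp only [mul_sum]
        rw [sum_comm]
        exact Fintype.sum_congr _ _ fun i => Fintype.sum_congr _ _ fun ω => by ring
    _ ≤ ∑ i, t i / ∑ j, t j :=
        sum_le_sum fun i _ =>
          mul_le_of_le_one_right (div_nonneg (ht i) (sum_nonneg fun j _ => ht j)) (h i)
    _ ≤ 1 := by
        rw [← sum_div]
        exact div_self_le_one _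

lemma sum_prod_mul_nested_ratio_le {A : Type*} [Fintype A] {P : A → ℝ} (hP : ∀ a, 0 ≤ P a)
    (hPsum : ∑ a, P a = 1) {sA sB sC : A → Prop} [DecidablePred sA] [DecidablePred sB]
    [DecidablePred sC] (hAB : ∀ a, sA a → sB a) (hBC : ∀ a, sB a → sC a)
    (hA : 0 < ∑ a with sA a, P a) (N : ℕ) :
    ∑ ω : Fin N → A, (∏ n, P (ω n)) *
      ((∑ a with sC a, P a) * ((∑ a with sA a, P a) / ∑ a with sB a, P a) /
        (((#{n | sC (ω n)} + 1) / (N + 1)) *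
          ((#{n | sA (ω n)} + 1) / (#{n | sB (ω n)} + 1))))
      ≤ 1 := by
  set α := ∑ a with sA a, P a
  set β := ∑ a with sB a, P a
  set γ := ∑ a with sC a, P a
  have hαβ : α ≤ β :=
    sum_le_sum_of_subset_of_nonneg (monotone_filter_right _ fun a _ => hAB a) fun a _ _ => hP a
  have hβγ : β ≤ γ :=
    sum_le_sum_of_subset_of_nonneg (monotone_filter_right _ fun a _ => hBC a) fun a _ _ => hP a
  have hγ1 : γ ≤ 1 :=
    hPsum ▸ sum_le_sum_of_subset_of_nonneg (filter_subset _ _) fun a _ _ => hP a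
  have hβ : 0 < β := hA.trans_le hαβ
  have hγ : 0 < γ := hβ.trans_le hβγ
  have hratio : ∀ ω : Fin N → A,
      γ * (α / β) / (((#{n | sC (ω n)} + 1) / (N + 1)) *
          ((#{n | sA (ω n)} + 1) / (#{n | sB (ω n)} + 1)))
        = γ * (α / β) * (N + 1) * countRatio (nestedLabel sA sB sC ∘ ω) := by
    intro ω
    simp only [countRatio, nestedLabel, Function.comp, decide_eq_true_eq]
    field_simp
  calc _ = γ * (α / β) * (N + 1) *
        ∑ ω : Fin N → A, (∏ n, P (ω n)) * countRatio (nestedLabel sA sB sC ∘ ω) := by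
        simp only [hratio, mul_sum]
        exact Fintype.sum_congr _ _ fun ω => by ring
    _ = γ * (α / β) * (N + 1) * ∑ τ : Fin N → Bool × Bool × Bool,
          (∏ n, bernoulliTriple γ (β / γ) (α / β) (τ n)) * countRatio (collapse ∘ τ) := by
        rw [sum_prod_mul_comp_eq_of_law_eq (sum_mul_nestedLabel_eq hPsum hAB hBC hβ hγ)]
    _ ≤ γ * (α / β) * (N + 1) * (1 / ((N + 1) * γ * (α / β))) := by
        gcongr
        exact sum_prod_bernoulliTriple_mul_countRatio_le hγ hγ1 (div_nonneg hβ.le hγ.le)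
          ((div_le_one hγ).mpr hβγ) (div_pos hA hβ) ((div_le_one hβ).mpr hαβ)
    _ = 1 := by
        field_simp

theorem main_lemma_general
    {X Y Z : Type*} [Fintype X] [Fintype Y]
    [Fintype Z] [DecidableEq X] [DecidableEq Y] [DecidableEq Z]
    (P : X × Y × Z → ℝ) (hPpos : ∀ p, 0 < P p) (hPsum : ∑ p, P p = 1)
    (N : ℕ) (x : X) (y : Y) :
    ∑ ω : Fin N → X × Y × Z, (∏ n, P (ω n)) *
      ((∑ z, (∑ x', ∑ y', P (x', y', z)) * (P (x, y, z) / ∑ y', P (x, y', z))) /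
        (∑ z, ((((univ.filter (fun n : Fin N => (ω n).2.2 = z)).card : ℝ) + 1) / (N + 1)) *
          ((((univ.filter (fun n : Fin N => ω n = (x, y, z))).card : ℝ) + 1) /
            (((univ.filter (fun n : Fin N => ((ω n).1, (ω n).2.2) = (x, z))).card : ℝ) + 1))))
      ≤ 1 := by
  have hP : ∀ p, 0 ≤ P p := fun p => (hPpos p).le
  refine sum_mul_sum_div_sum_le_one (fun ω => prod_nonneg fun n _ => hP _)
    (fun z => mul_nonneg (sum_nonneg fun _ _ => sum_nonneg fun _ _ => hP _)
      (div_nonneg (hP _) (sum_nonneg fun _ _ => hP _)))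
    (fun ω z => by positivity) fun z => ?_
  have hC : ∑ a with a.2.2 = z, P a = ∑ x', ∑ y', P (x', y', z) := by
    simp [sum_filter, Fintype.sum_prod_type]
  have hB : ∑ a with (a.1, a.2.2) = (x, z), P a = ∑ y', P (x, y', z) := by
    simp [sum_filter, Fintype.sum_prod_type, ite_and]
  have hA : ∑ a with a = (x, y, z), P a = P (x, y, z) := by
    simp [sum_filter]
  have key := sum_prod_mul_nested_ratio_le hP hPsum (sA := (· = (x, y, z)))
    (sB := fun a => (a.1, a.2.2) = (x, z)) (sC := fun a => a.2.2 = z)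
    (by rintro _ rfl; rfl) (by rintro a h; simp_all) (hA ▸ hPpos _) N
  rwa [hA, hB, hC] at key

/-- Main lemma (Lemma 1): for an i.i.d. sample `(Xₙ,Yₙ,Zₙ)`, `n ∈ [N]`, from a
positive probability measure `P` on `X × Y × Z`, with the back-door adjusted
probability `p_y = ∑_z P(Z=z)·P(Y=y∣X=x,Z=z)` and its regularized estimate
`F_y = ∑_z ((|{n : Zₙ=z}|+1)/(N+1))·((|{n : (Xₙ,Yₙ,Zₙ)=(x,y,z)}|+1)/(|{n : (Xₙ,Zₙ)=(x,z)}|+1))`,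
we have `E[p_y/F_y] ≤ 1`. -/
theorem main_lemma
    {X Y Z : Type*} [Fintype X] [Nonempty X] [Fintype Y] [Nonempty Y]
    [Fintype Z] [Nonempty Z] [DecidableEq X] [DecidableEq Y] [DecidableEq Z]
    (P : X × Y × Z → ℝ) (hPpos : ∀ p, 0 < P p) (hPsum : ∑ p, P p = 1)
    (N : ℕ) (x : X) (y : Y) :
    ∑ ω : Fin N → X × Y × Z, (∏ n, P (ω n)) *
      ((∑ z, (∑ x', ∑ y', P (x', y', z)) * (P (x, y, z) / ∑ y', P (x, y', z))) /
        (∑ z, ((((univ.filter (fun n : Fin N => (ω n).2.2 = z)).card : ℝ) + 1) / (N + 1)) *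
          ((((univ.filter (fun n : Fin N => ω n = (x, y, z))).card : ℝ) + 1) /
            (((univ.filter (fun n : Fin N => ((ω n).1, (ω n).2.2) = (x, z))).card : ℝ) + 1))))
      ≤ 1 :=
  main_lemma_general P hPpos hPsum N x y
end

section
/- In the setting of the main lemma, let Y_{N+1} be a random variable in Y, independent of the sample (X_n,Y_n,Z_n), n in [N], taking each value y with probability p_y. Then for any probability measure Q on Y, the random variable E := Q({Y_{N+1}}) / F_{Y_{N+1}} is an e-variable: it is nonnegative and E[Q({Y_{N+1}})/F_{Y_{N+1}}] <= 1. -/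
open Finset

/-!
Summing over `y` first, the expectation is `∑_y Q y · E[p_y / F_y]`, so it suffices that
`E[p_y / F_y] ≤ 1` for every `y`. Write `p_y = ∑_z A_z` and `F_y = ∑_z B_z`. By Sedrakyan's
inequality `p_y / F_y ≤ p_y⁻¹ ∑_z A_z² / B_z`, so it is enough that `E[1 / B_z] ≤ 1 / A_z`.

For fixed `z` let `K₁ ≥ K₂ ≥ K₃` count the sample points with `Z = z`, with `(X, Z) = (x, z)` and
with `(X, Y, Z) = (x, y, z)`, so that `1 / B_z = (N + 1)(K₂ + 1) / ((K₁ + 1)(K₃ + 1))`. Given `K₂`,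
`K₃` is binomial with `K₂` trials, and `E[(m + 1) / (K + 1)] ≤ 1 / r` for `K ~ Bin(m, r)`. Applied
to `K₃` and then to `K₁` this gives `E[1 / B_z] ≤ P(x, z) / (P(z) P(x, y, z)) = 1 / A_z`. The
conditioning amounts to sorting the sample points into the four cells cut out by the nested
events, which turns the expectation into a sum over chains `U ⊆ T ⊆ S` of index sets.
-/

theorem sum_powerset_pow_mul_pow_mul_succ_div_succ_le {ι : Type*} (s : Finset ι) {a b : ℝ}
    (ha : 0 < a) (hb : 0 ≤ b) :
    ∑ t ∈ s.powerset, a ^ #t * b ^ (#s - #t) * ((#s + 1) / (#t + 1)) ≤ (a + b) ^ (#s + 1) / a := by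
  rw [sum_powerset_apply_card (fun k => a ^ k * b ^ (#s - k) * ((#s + 1) / ((k : ℝ) + 1))),
    le_div_iff₀ ha, sum_mul]
  set m := #s
  have hterm : ∀ k ∈ range (m + 1), m.choose k • (a ^ k * b ^ (m - k) * ((m + 1) / (k + 1))) * a
      = a ^ (k + 1) * b ^ (m + 1 - (k + 1)) * (m + 1).choose (k + 1) := by
    intro k _
    have h := congrArg (Nat.cast (R := ℝ)) (Nat.add_one_mul_choose_eq m k)
    push_cast at h
    rw [nsmul_eq_mul, Nat.add_sub_add_right]
    field_simp
    linear_combination (a ^ (k + 1) * b ^ (m - k)) * h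
  have hbinom := add_pow a b (m + 1)
  rw [sum_range_succ'] at hbinom
  simp only [Nat.sub_zero, pow_zero, Nat.choose_zero_right, Nat.cast_one, one_mul, mul_one]
    at hbinom
  rw [sum_congr rfl hterm]
  linarith [pow_nonneg hb (m + 1)]

theorem sum_chains_le {ι : Type*} [Fintype ι] {w₀ w₁ w₂ w₃ : ℝ} (h₀ : 0 ≤ w₀) (h₁ : 0 ≤ w₁)
    (h₂ : 0 ≤ w₂) (h₃ : 0 < w₃) (hw : w₀ + w₁ + w₂ + w₃ = 1) :
    ∑ S : Finset ι, ∑ T ∈ S.powerset, ∑ U ∈ T.powerset,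
      w₀ ^ (Fintype.card ι - #S) * w₁ ^ (#S - #T) * w₂ ^ (#T - #U) * w₃ ^ #U *
        ((#T + 1) / ((#S + 1) * (#U + 1)))
      ≤ (w₂ + w₃) / ((Fintype.card ι + 1) * (w₁ + w₂ + w₃) * w₃) := by
  set v := w₃ + w₂
  set q := v + w₁
  have hq : 0 < q := by positivity
  calc _ ≤ ∑ S : Finset ι, ∑ T ∈ S.powerset,
          w₀ ^ (Fintype.card ι - #S) / (#S + 1) * (v / w₃) * (v ^ #T * w₁ ^ (#S - #T)) := by
        gcongr with S _ T
        calc _ = w₀ ^ (Fintype.card ι - #S) * w₁ ^ (#S - #T) / (#S + 1) *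
                ∑ U ∈ T.powerset, w₃ ^ #U * w₂ ^ (#T - #U) * ((#T + 1) / (#U + 1)) := by
              rw [mul_sum]
              refine sum_congr rfl fun U _ => ?_
              field_simp
          _ ≤ w₀ ^ (Fintype.card ι - #S) * w₁ ^ (#S - #T) / (#S + 1) * (v ^ (#T + 1) / w₃) := by
              gcongr
              exact sum_powerset_pow_mul_pow_mul_succ_div_succ_le T h₃ h₂
          _ = _ := by ring
    _ = ∑ S : Finset ι, w₀ ^ (Fintype.card ι - #S) / (#S + 1) * (v / w₃) * q ^ #S := by
        simp_rw [← mul_sum, sum_pow_mul_eq_add_pow]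
        rfl
    _ = v / w₃ / (Fintype.card ι + 1) * ∑ S ∈ (univ : Finset ι).powerset,
          q ^ #S * w₀ ^ (#(univ : Finset ι) - #S) * ((#(univ : Finset ι) + 1) / (#S + 1)) := by
        rw [powerset_univ, card_univ, mul_sum]
        refine sum_congr rfl fun S _ => ?_
        field_simp
    _ ≤ v / w₃ / (Fintype.card ι + 1) * ((q + w₀) ^ (#(univ : Finset ι) + 1) / q) := by
        gcongr
        exact sum_powerset_pow_mul_pow_mul_succ_div_succ_le _ hq h₀
    _ = _ := by
        rw [show q + w₀ = 1 by linarith, one_pow]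
        field_simp
        ring

theorem sum_filter_and_not_add_sum_filter {α M : Type*} [Fintype α] [AddCommMonoid M] (f : α → M)
    {B D : α → Prop} [DecidablePred B] [DecidablePred D] (h : ∀ p, D p → B p) :
    ∑ p with B p ∧ ¬D p, f p + ∑ p with D p, f p = ∑ p with B p, f p := by
  have hD : ∑ p with B p ∧ D p, f p = ∑ p with D p, f p :=
    sum_congr (filter_congr fun p _ => ⟨And.right, fun hp => ⟨h p hp, hp⟩⟩) fun _ _ => rfl
  rw [← sum_filter_add_sum_filter_not (univ.filter B) D f, filter_filter, filter_filter, hD,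
    add_comm]

section Cells
variable {α ι : Type*} [Fintype α] [Fintype ι] [DecidableEq ι] (P : α → ℝ)
  (A₁ A₂ A₃ : α → Prop) [DecidablePred A₁] [DecidablePred A₂] [DecidablePred A₃]

def cellMass (a b c : Bool) : ℝ :=
  ∑ p with decide (A₁ p) = a ∧ decide (A₂ p) = b ∧ decide (A₃ p) = c, P p

theorem sum_prod_mul_eq_sum_cellMass (g : Finset ι → Finset ι → Finset ι → ℝ) :
    ∑ ω : ι → α, (∏ n, P (ω n)) * g {n | A₁ (ω n)} {n | A₂ (ω n)} {n | A₃ (ω n)} =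
      ∑ S, ∑ T, ∑ U, (∏ n, cellMass P A₁ A₂ A₃ (n ∈ S) (n ∈ T) (n ∈ U)) * g S T U := by
  rw [← sum_fiberwise univ (fun ω : ι → α => (({n | A₁ (ω n)} : Finset ι),
      ({n | A₂ (ω n)} : Finset ι), ({n | A₃ (ω n)} : Finset ι)))
    (fun ω => (∏ n, P (ω n)) * g {n | A₁ (ω n)} {n | A₂ (ω n)} {n | A₃ (ω n)})]
  simp only [Fintype.sum_prod_type]
  refine sum_congr rfl fun S _ => sum_congr rfl fun T _ => sum_congr rfl fun U _ => ?_
  have hfiber : ({ω | (({n | A₁ (ω n)} : Finset ι), ({n | A₂ (ω n)} : Finset ι),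
      ({n | A₃ (ω n)} : Finset ι)) = (S, T, U)} : Finset (ι → α)) = Fintype.piFinset fun n =>
        {p | decide (A₁ p) = decide (n ∈ S) ∧ decide (A₂ p) = decide (n ∈ T) ∧
          decide (A₃ p) = decide (n ∈ U)} := by
    ext ω
    simp [Finset.ext_iff, forall_and]
  rw [sum_congr rfl fun ω hω => by
      simp only [mem_filter, Prod.mk.injEq] at hω
      rw [hω.2.1, hω.2.2.1, hω.2.2.2],
    ← sum_mul, hfiber, ← prod_univ_sum]
  rfl

theorem prod_decide_mem_of_subset_of_subset {M : Type*} [CommMonoid M] {S T U : Finset ι}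
    (hUT : U ⊆ T) (hTS : T ⊆ S) (c : Bool → Bool → Bool → M) :
    ∏ n, c (n ∈ S) (n ∈ T) (n ∈ U) = c false false false ^ (Fintype.card ι - #S) *
      c true false false ^ (#S - #T) * c true true false ^ (#T - #U) * c true true true ^ #U := by
  have hregion (s : Finset ι) (a b d : Bool)
      (h : ∀ n ∈ s, decide (n ∈ S) = a ∧ decide (n ∈ T) = b ∧ decide (n ∈ U) = d) :
      ∏ n ∈ s, c (n ∈ S) (n ∈ T) (n ∈ U) = c a b d ^ #s := by
    rw [prod_congr rfl fun n hn => by rw [(h n hn).1, (h n hn).2.1, (h n hn).2.2], prod_const]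
  rw [← prod_sdiff (subset_univ S), ← prod_sdiff hTS, ← prod_sdiff hUT,
    hregion (univ \ S) false false false fun n hn => ?_,
    hregion (S \ T) true false false fun n hn => ?_,
    hregion (T \ U) true true false fun n hn => ?_, hregion U true true true fun n hn => ?_,
    card_sdiff_of_subset (subset_univ S), card_sdiff_of_subset hTS, card_sdiff_of_subset hUT,
    card_univ, mul_assoc, mul_assoc]
  · simp [hn, hUT hn, hTS (hUT hn)]
  · obtain ⟨hT, hU⟩ := mem_sdiff.1 hn
    simp [hTS hT, hT, hU]
  · obtain ⟨hS, hT⟩ := mem_sdiff.1 hn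
    have hU : n ∉ U := fun h => hT (hUT h)
    simp [hS, hT, hU]
  · obtain ⟨-, hS⟩ := mem_sdiff.1 hn
    have hT : n ∉ T := fun h => hS (hTS h)
    have hU : n ∉ U := fun h => hT (hUT h)
    simp [hS, hT, hU]

variable {P A₁ A₂ A₃}

theorem prod_cellMass_eq_zero (h₂₁ : ∀ p, A₂ p → A₁ p) (h₃₂ : ∀ p, A₃ p → A₂ p)
    {S T U : Finset ι} (h : ¬(U ⊆ T ∧ T ⊆ S)) :
    ∏ n, cellMass P A₁ A₂ A₃ (n ∈ S) (n ∈ T) (n ∈ U) = 0 := by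
  simp only [not_and_or, not_subset] at h
  obtain ⟨n, hn, hn'⟩ | ⟨n, hn, hn'⟩ := h
  · refine prod_eq_zero (mem_univ n) (sum_eq_zero fun p hp => ?_)
    simp [hn, hn'] at hp
    exact absurd (h₃₂ p hp.2.2) hp.2.1
  · refine prod_eq_zero (mem_univ n) (sum_eq_zero fun p hp => ?_)
    simp [hn, hn'] at hp
    exact absurd (h₂₁ p hp.2.1) hp.1

theorem sum_prod_mul_eq_sum_chains (h₂₁ : ∀ p, A₂ p → A₁ p) (h₃₂ : ∀ p, A₃ p → A₂ p)
    (g : ℕ → ℕ → ℕ → ℝ) :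
    ∑ ω : ι → α, (∏ n, P (ω n)) * g #{n | A₁ (ω n)} #{n | A₂ (ω n)} #{n | A₃ (ω n)} =
      ∑ S : Finset ι, ∑ T ∈ S.powerset, ∑ U ∈ T.powerset,
        cellMass P A₁ A₂ A₃ false false false ^ (Fintype.card ι - #S) *
          cellMass P A₁ A₂ A₃ true false false ^ (#S - #T) *
          cellMass P A₁ A₂ A₃ true true false ^ (#T - #U) *
          cellMass P A₁ A₂ A₃ true true true ^ #U * g #S #T #U := by
  rw [sum_prod_mul_eq_sum_cellMass P A₁ A₂ A₃ fun S T U => g #S #T #U]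
  refine sum_congr rfl fun S _ => ?_
  rw [← sum_subset (subset_univ S.powerset) fun T _ hT => sum_eq_zero fun U _ => by
    rw [prod_cellMass_eq_zero h₂₁ h₃₂ fun h => hT (mem_powerset.2 h.2), zero_mul]]
  refine sum_congr rfl fun T hT => ?_
  rw [← sum_subset (subset_univ T.powerset) fun U _ hU => by
    rw [prod_cellMass_eq_zero h₂₁ h₃₂ fun h => hU (mem_powerset.2 h.1), zero_mul]]
  refine sum_congr rfl fun U hU => ?_
  rw [prod_decide_mem_of_subset_of_subset (mem_powerset.1 hU) (mem_powerset.1 hT)]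

theorem sum_prod_mul_card_ratio_le (hP : ∀ p, 0 ≤ P p) (hP₁ : ∑ p, P p = 1)
    (h₂₁ : ∀ p, A₂ p → A₁ p) (h₃₂ : ∀ p, A₃ p → A₂ p) (h₃ : 0 < ∑ p with A₃ p, P p) :
    ∑ ω : ι → α, (∏ n, P (ω n)) *
        ((#{n | A₂ (ω n)} + 1) / ((#{n | A₁ (ω n)} + 1) * (#{n | A₃ (ω n)} + 1)))
      ≤ (∑ p with A₂ p, P p) /
          ((Fintype.card ι + 1) * (∑ p with A₁ p, P p) * ∑ p with A₃ p, P p) := by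
  have hw₃ : cellMass P A₁ A₂ A₃ true true true = ∑ p with A₃ p, P p :=
    sum_congr (filter_congr fun p _ => by have := h₂₁ p; have := h₃₂ p; simp; tauto) fun _ _ => rfl
  have hw₂ : cellMass P A₁ A₂ A₃ true true false + ∑ p with A₃ p, P p = ∑ p with A₂ p, P p := by
    rw [← sum_filter_and_not_add_sum_filter P h₃₂]
    congr 1
    exact sum_congr (filter_congr fun p _ => by have := h₂₁ p; simp; tauto) fun _ _ => rfl
  have hw₁ : cellMass P A₁ A₂ A₃ true false false + ∑ p with A₂ p, P p = ∑ p with A₁ p, P p := by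
    rw [← sum_filter_and_not_add_sum_filter P h₂₁]
    congr 1
    exact sum_congr (filter_congr fun p _ => by have := h₃₂ p; simp; tauto) fun _ _ => rfl
  have hw₀ : cellMass P A₁ A₂ A₃ false false false + ∑ p with A₁ p, P p = 1 := by
    rw [← hP₁, ← sum_filter_not_add_sum_filter univ A₁ P]
    congr 1
    exact sum_congr (filter_congr fun p _ => by have := h₂₁ p; have := h₃₂ p; simp; tauto)
      fun _ _ => rfl
  refine (sum_prod_mul_eq_sum_chains h₂₁ h₃₂
    fun k₁ k₂ k₃ => ((k₂ : ℝ) + 1) / ((k₁ + 1) * (k₃ + 1))).trans_le ?_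
  have hcell (a b c : Bool) : 0 ≤ cellMass P A₁ A₂ A₃ a b c := sum_nonneg fun p _ => hP p
  refine (sum_chains_le (hcell _ _ _) (hcell _ _ _) (hcell _ _ _) (hw₃ ▸ h₃)
    (by linarith)).trans_eq ?_
  rw [← hw₁, ← hw₂, hw₃]
  ring

end Cells

theorem sum_mul_sum_div_sum_le_one_s8 {ι Ω : Type*} [Fintype ι] [Fintype Ω] {W : Ω → ℝ}
    {A : ι → ℝ} {B : Ω → ι → ℝ} (hW : ∀ ω, 0 ≤ W ω) (hA : ∀ i, 0 < A i)
    (hB : ∀ ω i, 0 < B ω i) (h : ∀ i, ∑ ω, W ω / B ω i ≤ (A i)⁻¹) :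
    ∑ ω, W ω * ((∑ i, A i) / ∑ i, B ω i) ≤ 1 := by
  set a := ∑ i, A i
  have ha : 0 ≤ a := sum_nonneg fun i _ => (hA i).le
  have hSedrakyan (ω : Ω) : a / ∑ i, B ω i ≤ (∑ i, A i ^ 2 / B ω i) / a := by
    calc a / ∑ i, B ω i = a ^ 2 / (∑ i, B ω i) / a := by
          rcases ha.eq_or_lt with ha0 | ha0
          · simp [← ha0]
          · field_simp
      _ ≤ (∑ i, A i ^ 2 / B ω i) / a := by
          gcongr
          exact sq_sum_div_le_sum_sq_div _ _ fun i _ => hB ω i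
  calc ∑ ω, W ω * (a / ∑ i, B ω i) ≤ ∑ ω, W ω * ((∑ i, A i ^ 2 / B ω i) / a) :=
        sum_le_sum fun ω _ => mul_le_mul_of_nonneg_left (hSedrakyan ω) (hW ω)
    _ = (∑ i, A i ^ 2 * ∑ ω, W ω / B ω i) / a := by
        simp only [mul_sum, sum_div]
        rw [sum_comm]
        exact sum_congr rfl fun i _ => sum_congr rfl fun ω _ => by ring
    _ ≤ (∑ i, A i ^ 2 * (A i)⁻¹) / a := by
        gcongr with i
        exact h i
    _ = a / a := by
        congr 1
        exact sum_congr rfl fun i _ => by field_simp [(hA i).ne']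
    _ ≤ 1 := div_self_le_one a

section Adjustment
variable {X Y Z : Type*} [Fintype X] [Fintype Y] [Fintype Z]

/-- The paper's `p_y`: back-door adjustment of `P(Y = y ∣ X = x, Z)` over `Z`. -/
noncomputable def adjustedProb (P : X × Y × Z → ℝ) (x : X) (y : Y) : ℝ :=
  ∑ z, (∑ x', ∑ y', P (x', y', z)) * (P (x, y, z) / ∑ y', P (x, y', z))

/-- The paper's `F_y`: the plug-in estimate of `p_y` from the sample `ω`, with every count
raised by one. -/
noncomputable def adjustedEstimate [DecidableEq X] [DecidableEq Y] [DecidableEq Z] {N : ℕ}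
    (x : X) (ω : Fin N → X × Y × Z) (y : Y) : ℝ :=
  ∑ z, (((#{n | (ω n).2.2 = z} : ℝ) + 1) / (N + 1)) *
    (((#{n | ω n = (x, y, z)} : ℝ) + 1) / ((#{n | ((ω n).1, (ω n).2.2) = (x, z)} : ℝ) + 1))

theorem sum_filter_snd_snd_eq [DecidableEq Z] (P : X × Y × Z → ℝ) (z : Z) :
    ∑ p with p.2.2 = z, P p = ∑ x', ∑ y', P (x', y', z) := by
  simp [sum_filter, Fintype.sum_prod_type]

theorem sum_filter_fst_snd_snd_eq [DecidableEq X] [DecidableEq Z] (P : X × Y × Z → ℝ) (x : X)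
    (z : Z) :
    ∑ p with (p.1, p.2.2) = (x, z), P p = ∑ y', P (x, y', z) := by
  simp [sum_filter, Fintype.sum_prod_type, ite_and]

theorem sum_prod_mul_adjustedProb_div_adjustedEstimate_le_one [DecidableEq X] [DecidableEq Y]
    [DecidableEq Z] {P : X × Y × Z → ℝ} (hP : ∀ p, 0 < P p) (hP₁ : ∑ p, P p = 1) (N : ℕ)
    (x : X) (y : Y) :
    ∑ ω : Fin N → X × Y × Z, (∏ n, P (ω n)) * (adjustedProb P x y / adjustedEstimate x ω y)
      ≤ 1 := by
  have hq (z : Z) : 0 < ∑ x', ∑ y', P (x', y', z) :=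
    sum_pos (fun x' _ => sum_pos (fun _ _ => hP _) ⟨y, mem_univ _⟩) ⟨x, mem_univ _⟩
  have hs (z : Z) : 0 < ∑ y', P (x, y', z) := sum_pos (fun _ _ => hP _) ⟨y, mem_univ _⟩
  unfold adjustedProb adjustedEstimate
  refine sum_mul_sum_div_sum_le_one_s8 (fun ω => prod_nonneg fun n _ => (hP _).le)
    (fun z => mul_pos (hq z) (div_pos (hP _) (hs z))) (fun ω z => by positivity) fun z => ?_
  have ht' : ∑ p with p = (x, y, z), P p = P (x, y, z) := by
    rw [filter_eq', if_pos (mem_univ _), sum_singleton]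
  have key := sum_prod_mul_card_ratio_le (ι := Fin N) (A₁ := fun p => p.2.2 = z)
    (A₂ := fun p => (p.1, p.2.2) = (x, z)) (A₃ := fun p => p = (x, y, z)) (fun p => (hP p).le) hP₁
    (fun p h => congrArg Prod.snd h) (fun p h => by rw [h]) (ht'.symm ▸ hP _)
  simp only [sum_filter_snd_snd_eq, sum_filter_fst_snd_snd_eq, ht', Fintype.card_fin] at key
  calc _ = (N + 1) * ∑ ω : Fin N → X × Y × Z, (∏ n, P (ω n)) *
          ((#{n | ((ω n).1, (ω n).2.2) = (x, z)} + 1) /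
            ((#{n | (ω n).2.2 = z} + 1) * (#{n | ω n = (x, y, z)} + 1))) := by
        rw [mul_sum]
        refine sum_congr rfl fun ω _ => ?_
        field_simp
    _ ≤ (N + 1) *
          ((∑ y', P (x, y', z)) / ((N + 1) * (∑ x', ∑ y', P (x', y', z)) * P (x, y, z))) := by
        gcongr
    _ = _ := by field_simp [(hq z).ne', (hs z).ne', (hP (x, y, z)).ne']

end Adjustment

theorem causal_e_variable_general
    {X Y Z : Type*} [Fintype X] [Fintype Y]
    [Fintype Z] [DecidableEq X] [DecidableEq Y] [DecidableEq Z]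
    (P : X × Y × Z → ℝ) (hPpos : ∀ p, 0 < P p) (hPsum : ∑ p, P p = 1)
    (Q : Y → ℝ) (hQnonneg : ∀ y, 0 ≤ Q y) (hQsum : ∑ y, Q y = 1)
    (N : ℕ) (x : X) :
    (∀ (ω : Fin N → X × Y × Z) (y : Y),
      0 ≤ Q y /
        (∑ z, ((((univ.filter (fun n : Fin N => (ω n).2.2 = z)).card : ℝ) + 1) / (N + 1)) *
          ((((univ.filter (fun n : Fin N => ω n = (x, y, z))).card : ℝ) + 1) /
            (((univ.filter (fun n : Fin N => ((ω n).1, (ω n).2.2) = (x, z))).card : ℝ) + 1)))) ∧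
    ∑ ω : Fin N → X × Y × Z, ∑ y : Y, (∏ n, P (ω n)) *
      (∑ z, (∑ x', ∑ y', P (x', y', z)) * (P (x, y, z) / ∑ y', P (x, y', z))) *
      (Q y /
        (∑ z, ((((univ.filter (fun n : Fin N => (ω n).2.2 = z)).card : ℝ) + 1) / (N + 1)) *
          ((((univ.filter (fun n : Fin N => ω n = (x, y, z))).card : ℝ) + 1) /
            (((univ.filter (fun n : Fin N => ((ω n).1, (ω n).2.2) = (x, z))).card : ℝ) + 1))))
      ≤ 1 := by
  refine ⟨fun ω y => div_nonneg (hQnonneg y) (by positivity), ?_⟩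
  calc _ = ∑ y, Q y * ∑ ω : Fin N → X × Y × Z,
          (∏ n, P (ω n)) * (adjustedProb P x y / adjustedEstimate x ω y) := by
        rw [sum_comm]
        refine sum_congr rfl fun y _ => ?_
        rw [mul_sum]
        exact sum_congr rfl fun ω _ => by unfold adjustedProb adjustedEstimate; ring
    _ ≤ ∑ y, Q y * 1 := by
        gcongr with y
        · exact hQnonneg y
        · exact sum_prod_mul_adjustedProb_div_adjustedEstimate_le_one hPpos hPsum N x y
    _ = 1 := by simp [hQsum]

/-- Corollary 1: in the setting of the main lemma, if `Y_{N+1}` is independent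
of the sample and takes each value `y` with probability
`p_y = ∑_z P(Z=z)·P(Y=y∣X=x,Z=z)`, then for any probability measure `Q` on `Y`
the random variable `E = Q({Y_{N+1}})/F_{Y_{N+1}}` is an e-variable: it is
nonnegative and its expectation (over the joint law of the sample and
`Y_{N+1}`) is at most 1. -/
theorem causal_e_variable
    {X Y Z : Type*} [Fintype X] [Nonempty X] [Fintype Y] [Nonempty Y]
    [Fintype Z] [Nonempty Z] [DecidableEq X] [DecidableEq Y] [DecidableEq Z]
    (P : X × Y × Z → ℝ) (hPpos : ∀ p, 0 < P p) (hPsum : ∑ p, P p = 1)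
    (Q : Y → ℝ) (hQnonneg : ∀ y, 0 ≤ Q y) (hQsum : ∑ y, Q y = 1)
    (N : ℕ) (x : X) :
    (∀ (ω : Fin N → X × Y × Z) (y : Y),
      0 ≤ Q y /
        (∑ z, ((((univ.filter (fun n : Fin N => (ω n).2.2 = z)).card : ℝ) + 1) / (N + 1)) *
          ((((univ.filter (fun n : Fin N => ω n = (x, y, z))).card : ℝ) + 1) /
            (((univ.filter (fun n : Fin N => ((ω n).1, (ω n).2.2) = (x, z))).card : ℝ) + 1)))) ∧
    ∑ ω : Fin N → X × Y × Z, ∑ y : Y, (∏ n, P (ω n)) *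
      (∑ z, (∑ x', ∑ y', P (x', y', z)) * (P (x, y, z) / ∑ y', P (x, y', z))) *
      (Q y /
        (∑ z, ((((univ.filter (fun n : Fin N => (ω n).2.2 = z)).card : ℝ) + 1) / (N + 1)) *
          ((((univ.filter (fun n : Fin N => ω n = (x, y, z))).card : ℝ) + 1) /
            (((univ.filter (fun n : Fin N => ((ω n).1, (ω n).2.2) = (x, z))).card : ℝ) + 1))))
      ≤ 1 :=
  causal_e_variable_general P hPpos hPsum Q hQnonneg hQsum N x
end

section
/- Let X, Z be finite nonempty types. Suppose Z_1,...,Z_N are i.i.d. with a positive law mu on Z, and each X_n is generated (possibly depending on Z_n and on all X_i, Z_i for i < n) in an arbitrary way, while conditionally on all objects (X_n, Z_n)_{n<=N} the labels Y_1,...,Y_N are independent with Y_n having law Q(· | X_n, Z_n) for a fixed positive conditional law Q. Fix x, y, z. Then E[ p_{y,z} / F_{y,z} ] <= 1, where p_{y,z} := mu(z)·Q(y | x, z) and F_{y,z} := ((|{n : Z_n=z}|+1)/(N+1)) · ((|{n : (X_n,Y_n,Z_n)=(x,y,z)}|+1)/(|{n : (X_n,Z_n)=(x,z)}|+1)). 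-/
/-!
Fix the seed `u` and the confounders; they determine the objects, so the labels are independent
and each index `n ∈ S`, i.e. with `(Xₙ, Zₙ) = (x, z)`, has `Yₙ = y` with the same chance
`q = Q(y|x,z)`, whatever the strategy does. Hence the count `K` of `(x, y, z)`-triples is
`Binomial(#S, q)`. Writing `1/(K+1) = ∫₀¹ t^K dt` and factoring `E[t^K] = (qt + 1 - q)^#S` over
the independent coordinates gives `E[(#S+1)/(K+1)] = (1 - (1-q)^(#S+1))/q ≤ 1/q`. With `S` all
indices the same bound controls the confounder factor by `1/μ(z)`, and the two bounds multiply.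
-/

open Finset

theorem integral_mul_add_pow {q : ℝ} (hq : q ≠ 0) (m : ℕ) :
    ∫ t in (0 : ℝ)..1, (q * t + (1 - q)) ^ m = (1 - (1 - q) ^ (m + 1)) / (q * (m + 1)) := by
  rw [intervalIntegral.integral_comp_mul_add (fun t => t ^ m) hq]
  simp only [mul_zero, zero_add, mul_one, integral_pow, smul_eq_mul]
  field_simp
  ring

section
variable {ι α : Type*} [Fintype ι] [DecidableEq ι] [Fintype α] [DecidableEq α]

theorem sum_prod_mul_pow_card_filter_s15 (p : ι → α → ℝ) (hp : ∀ i, ∑ b, p i b = 1)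
    (S : Finset ι) (a : α) (q : ℝ) (hq : ∀ i ∈ S, p i a = q) (t : ℝ) :
    ∑ g : ι → α, (∏ i, p i (g i)) * t ^ #{i ∈ S | g i = a} = (q * t + (1 - q)) ^ #S := by
  have hfactor (i : ι) : ∑ b, p i b * (if i ∈ S then if b = a then t else 1 else 1)
      = if i ∈ S then q * t + (1 - q) else 1 := by
    split_ifs with hi
    · have hsplit (b : α) : p i b * (if b = a then t else 1)
          = p i b + if b = a then p i a * (t - 1) else 0 := by
        split_ifs with hb <;> [subst hb; skip] <;> ring
      simp only [hsplit, sum_add_distrib, sum_ite_eq', mem_univ, if_true, hp, hq i hi]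
      ring
    · simp [hp]
  calc ∑ g : ι → α, (∏ i, p i (g i)) * t ^ #{i ∈ S | g i = a}
      = ∑ g : ι → α, ∏ i, p i (g i) * (if i ∈ S then if g i = a then t else 1 else 1) := by
        refine sum_congr rfl fun g _ => ?_
        rw [prod_mul_distrib, ← prod_const, prod_filter, prod_ite_mem, univ_inter]
    _ = ∏ i, if i ∈ S then q * t + (1 - q) else 1 := by
        simp only [← hfactor, Fintype.prod_sum]
    _ = (q * t + (1 - q)) ^ #S := by rw [prod_ite_mem, univ_inter, prod_const]

theorem sum_prod_mul_inv_card_filter_add_one (p : ι → α → ℝ) (hp : ∀ i, ∑ b, p i b = 1)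
    (S : Finset ι) (a : α) {q : ℝ} (hq0 : q ≠ 0) (hq : ∀ i ∈ S, p i a = q) :
    ∑ g : ι → α, (∏ i, p i (g i)) * ((#{i ∈ S | g i = a} : ℝ) + 1)⁻¹
      = (1 - (1 - q) ^ (#S + 1)) / (q * (#S + 1)) := by
  calc ∑ g : ι → α, (∏ i, p i (g i)) * ((#{i ∈ S | g i = a} : ℝ) + 1)⁻¹
      = ∫ t in (0 : ℝ)..1, ∑ g : ι → α, (∏ i, p i (g i)) * t ^ #{i ∈ S | g i = a} := by
        rw [intervalIntegral.integral_finsetSum fun g _ => by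
          apply Continuous.intervalIntegrable; fun_prop]
        simp [integral_pow]
    _ = (1 - (1 - q) ^ (#S + 1)) / (q * (#S + 1)) := by
        simp only [sum_prod_mul_pow_card_filter_s15 p hp S a q hq, integral_mul_add_pow hq0]

theorem sum_prod_mul_div_card_filter_le (p : ι → α → ℝ) (hp : ∀ i, ∑ b, p i b = 1)
    (S : Finset ι) (a : α) {q : ℝ} (hq0 : 0 < q) (hq1 : q ≤ 1) (hq : ∀ i ∈ S, p i a = q) :
    ∑ g : ι → α, (∏ i, p i (g i)) * (((#S : ℝ) + 1) / (#{i ∈ S | g i = a} + 1)) ≤ q⁻¹ := by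
  simp_rw [div_eq_mul_inv, mul_left_comm _ ((#S : ℝ) + 1), ← mul_sum,
    sum_prod_mul_inv_card_filter_add_one p hp S a hq0.ne' hq]
  have : 0 ≤ (1 - q) ^ (#S + 1) := pow_nonneg (sub_nonneg.2 hq1) _
  rw [mul_div_assoc', mul_comm q, ← div_div, mul_div_cancel_left₀ _ (by positivity),
    inv_eq_one_div]
  gcongr
  linarith

theorem sum_prod_mul_card_div_card_filter_le {Z : Type*} [Fintype Z] [DecidableEq Z]
    (μ : Z → ℝ) (hμpos : ∀ z, 0 < μ z) (hμsum : ∑ z, μ z = 1) (z : Z) :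
    ∑ zs : ι → Z, (∏ n, μ (zs n)) * (((Fintype.card ι : ℝ) + 1) / (#{n | zs n = z} + 1))
      ≤ (μ z)⁻¹ := by
  simpa using sum_prod_mul_div_card_filter_le (fun _ => μ) (fun _ => hμsum) univ z (hμpos z)
    (hμsum ▸ single_le_sum (fun b _ => (hμpos b).le) (mem_univ z)) fun _ _ => rfl

theorem sum_prod_mul_card_filter_div_card_filter_le {X Y Z : Type*} [Fintype Y] [DecidableEq X]
    [DecidableEq Y] [DecidableEq Z] (Q : X → Z → Y → ℝ) (hQpos : ∀ x z y, 0 < Q x z y)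
    (hQsum : ∀ x z, ∑ y, Q x z y = 1) (xs : ι → X) (zs : ι → Z) (x : X) (y : Y) (z : Z) :
    ∑ ys : ι → Y, (∏ n, Q (xs n) (zs n) (ys n)) *
      (((#{n | (xs n, zs n) = (x, z)} : ℝ) + 1) / (#{n | (xs n, ys n, zs n) = (x, y, z)} + 1))
      ≤ (Q x z y)⁻¹ := by
  have hfilter (ys : ι → Y) : ({n | (xs n, ys n, zs n) = (x, y, z)} : Finset ι)
      = ({n | (xs n, zs n) = (x, z)} : Finset ι).filter (ys · = y) := by
    ext n
    simp only [mem_filter, mem_univ, true_and, Prod.mk.injEq]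
    tauto
  simp only [hfilter]
  refine sum_prod_mul_div_card_filter_le _ (fun n => hQsum _ _) _ y (hQpos x z y)
    (hQsum x z ▸ single_le_sum (fun b _ => (hQpos x z b).le) (mem_univ y)) ?_
  intro n hn
  simp only [mem_filter, mem_univ, true_and, Prod.mk.injEq] at hn
  rw [hn.1, hn.2]
end

theorem per_z_bound_Y_oblivious_general
    {X Y Z U : Type*} [Fintype Y]
    [Fintype Z] [Fintype U]
    [DecidableEq X] [DecidableEq Y] [DecidableEq Z]
    (μ : Z → ℝ) (hμpos : ∀ z, 0 < μ z) (hμsum : ∑ z, μ z = 1)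
    (ν : U → ℝ) (hνnonneg : ∀ u, 0 ≤ ν u) (hνsum : ∑ u, ν u = 1)
    (Q : X → Z → Y → ℝ) (hQpos : ∀ x z y, 0 < Q x z y)
    (hQsum : ∀ x z, ∑ y, Q x z y = 1)
    (N : ℕ) (f : Fin N → (Fin N → Z) → U → X)
    (x : X) (y : Y) (z : Z) :
    ∑ u : U, ∑ zs : Fin N → Z, ∑ ys : Fin N → Y,
      ν u * (∏ n, μ (zs n)) * (∏ n, Q (f n zs u) (zs n) (ys n)) *
        ((μ z * Q x z y) /
          (((((univ.filter (fun n : Fin N => zs n = z)).card : ℝ) + 1) / (N + 1)) *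
            ((((univ.filter (fun n : Fin N =>
                  (f n zs u, ys n, zs n) = (x, y, z))).card : ℝ) + 1) /
              (((univ.filter (fun n : Fin N =>
                  (f n zs u, zs n) = (x, z))).card : ℝ) + 1))))
      ≤ 1 := by
  have hμz := hμpos z
  have hQ := hQpos x z y
  have hconfounders : ∑ zs : Fin N → Z, (∏ n, μ (zs n)) * ((N + 1) / (#{n | zs n = z} + 1))
      ≤ (μ z)⁻¹ := by
    simpa using sum_prod_mul_card_div_card_filter_le (ι := Fin N) μ hμpos hμsum z
  calc _ = ∑ u, ν u * (μ z * Q x z y) * ∑ zs : Fin N → Z,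
          (∏ n, μ (zs n)) * ((N + 1) / (#{n | zs n = z} + 1)) *
          ∑ ys : Fin N → Y, (∏ n, Q (f n zs u) (zs n) (ys n)) *
            ((#{n | (f n zs u, zs n) = (x, z)} + 1) /
              (#{n | (f n zs u, ys n, zs n) = (x, y, z)} + 1)) := by
        simp only [mul_sum]
        refine sum_congr rfl fun u _ => sum_congr rfl fun zs _ => sum_congr rfl fun ys _ => ?_
        field_simp
    _ ≤ ∑ u, ν u * (μ z * Q x z y) * ((μ z)⁻¹ * (Q x z y)⁻¹) := by
        gcongr with u
        · exact mul_nonneg (hνnonneg u) (by positivity)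
        calc _ ≤ ∑ zs : Fin N → Z, (∏ n, μ (zs n)) * ((N + 1) / (#{n | zs n = z} + 1)) *
              (Q x z y)⁻¹ := by
              gcongr with zs
              · exact mul_nonneg (prod_nonneg fun n _ => (hμpos _).le) (by positivity)
              · exact sum_prod_mul_card_filter_div_card_filter_le Q hQpos hQsum _ zs x y z
          _ ≤ (μ z)⁻¹ * (Q x z y)⁻¹ := by
              rw [← sum_mul]
              gcongr
    _ = 1 := by
        rw [← hνsum]
        refine sum_congr rfl fun u _ => ?_
        field_simp

/-- Per-`z` bound under the Y-oblivious interpretation (Lemma 2): the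
confounders `Zₙ` are i.i.d. with positive law `μ`; each object `Xₙ` is produced
by an arbitrary (possibly randomized, via a seed `u` with law `ν`) strategy `f`
that may depend on the confounders `Z₁,…,Zₙ` observed so far (and hence on all
past objects) but not on past labels; and, given the objects and confounders,
the labels `Yₙ` are independent with `Yₙ ∼ Q(·∣Xₙ,Zₙ)` for a fixed positive
conditional law `Q`. Then `E[p_{y,z}/F_{y,z}] ≤ 1` where
`p_{y,z} = μ(z)·Q(y∣x,z)` and `F_{y,z}` is as in the main lemma. -/
theorem per_z_bound_Y_oblivious
    {X Y Z U : Type*} [Fintype X] [Nonempty X] [Fintype Y] [Nonempty Y]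
    [Fintype Z] [Nonempty Z] [Fintype U] [Nonempty U]
    [DecidableEq X] [DecidableEq Y] [DecidableEq Z]
    (μ : Z → ℝ) (hμpos : ∀ z, 0 < μ z) (hμsum : ∑ z, μ z = 1)
    (ν : U → ℝ) (hνnonneg : ∀ u, 0 ≤ ν u) (hνsum : ∑ u, ν u = 1)
    (Q : X → Z → Y → ℝ) (hQpos : ∀ x z y, 0 < Q x z y)
    (hQsum : ∀ x z, ∑ y, Q x z y = 1)
    (N : ℕ) (f : Fin N → (Fin N → Z) → U → X)
    (hf : ∀ (n : Fin N) (zs zs' : Fin N → Z) (u : U),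
      (∀ i : Fin N, i ≤ n → zs i = zs' i) → f n zs u = f n zs' u)
    (x : X) (y : Y) (z : Z) :
    ∑ u : U, ∑ zs : Fin N → Z, ∑ ys : Fin N → Y,
      ν u * (∏ n, μ (zs n)) * (∏ n, Q (f n zs u) (zs n) (ys n)) *
        ((μ z * Q x z y) /
          (((((univ.filter (fun n : Fin N => zs n = z)).card : ℝ) + 1) / (N + 1)) *
            ((((univ.filter (fun n : Fin N =>
                  (f n zs u, ys n, zs n) = (x, y, z))).card : ℝ) + 1) /
              (((univ.filter (fun n : Fin N =>
                  (f n zs u, zs n) = (x, z))).card : ℝ) + 1))))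
      ≤ 1 :=
  per_z_bound_Y_oblivious_general μ hμpos hμsum ν hνnonneg hνsum Q hQpos hQsum N f x y z
end
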